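/- arXiv:2106.12310 — 3 statements merged into one kernel-verified Lean document; each statement's English description precedes it below -/
import Mathlib

section
/- Let X be a smooth vector field on ℝ^{1+n} whose first (time) component is identically 1 and which is divergence-free (div X = 0 identically), and let Y be a smooth vector field with first (time) component Y⁰ that is an infinitesimal symmetry of the one-dimensional distribution generated by X, i.e. [Y,X] = λ·X for some smooth function λ. Then the function div Y − X(Y⁰) is a first integral of X, i.e. X(div Y − X(Y⁰)) = 0 identically. -/
/-- The divergence of a vector field on ℝ^m: the trace of its Fréchet derivative. -/
noncomputable def vdiv {m : ℕ} (X : (Fin m → ℝ) → (Fin m → ℝ)) (x : Fin m → ℝ) : ℝ :=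
  LinearMap.trace ℝ (Fin m → ℝ) (fderiv ℝ X x : (Fin m → ℝ) →ₗ[ℝ] (Fin m → ℝ))

/-- The Lie bracket of vector fields: [X,Y](x) = DY(x)(X(x)) − DX(x)(Y(x)). -/
noncomputable def lieBracket {m : ℕ} (X Y : (Fin m → ℝ) → (Fin m → ℝ))
    (x : Fin m → ℝ) : Fin m → ℝ :=
  fderiv ℝ Y x (X x) - fderiv ℝ X x (Y x)

noncomputable def traceCLM (m : ℕ) : ((Fin m → ℝ) →L[ℝ] (Fin m → ℝ)) →L[ℝ] ℝ :=
  LinearMap.toContinuousLinearMap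
    ((LinearMap.trace ℝ (Fin m → ℝ)).comp (ContinuousLinearMap.coeLM ℝ))

lemma traceCLM_apply {m : ℕ} (f : (Fin m → ℝ) →L[ℝ] (Fin m → ℝ)) :
    traceCLM m f = LinearMap.trace ℝ (Fin m → ℝ) (f : (Fin m → ℝ) →ₗ[ℝ] _) := rfl

lemma vdiv_eq {m : ℕ} (X : (Fin m → ℝ) → (Fin m → ℝ)) (x : Fin m → ℝ) :
    vdiv X x = traceCLM m (fderiv ℝ X x) := rfl

lemma trace_pi {m : ℕ} (f : (Fin m → ℝ) →ₗ[ℝ] (Fin m → ℝ)) :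
    LinearMap.trace ℝ (Fin m → ℝ) f = ∑ i, f (Pi.single i 1) i := by
  rw [LinearMap.trace_eq_matrix_trace ℝ (Pi.basisFun ℝ (Fin m)) f, Matrix.trace]
  simp [Matrix.diag, LinearMap.toMatrix_apply]

lemma trace_smulRight {m : ℕ} (L : (Fin m → ℝ) →L[ℝ] ℝ) (x : Fin m → ℝ) :
    traceCLM m (L.smulRight x) = L x := by
  rw [traceCLM_apply, trace_pi]
  simp only [ContinuousLinearMap.coe_coe, ContinuousLinearMap.smulRight_apply, Pi.smul_apply,
    smul_eq_mul]
  have hx : x = ∑ i, x i • (Pi.single i 1 : Fin m → ℝ) := by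
    funext j
    simp [Finset.sum_apply, Pi.single_apply]
  conv_rhs => rw [hx]
  rw [map_sum]
  simp [mul_comm]

lemma trace_comp_comm_clm {m : ℕ} (f g : (Fin m → ℝ) →L[ℝ] (Fin m → ℝ)) :
    traceCLM m (f.comp g) = traceCLM m (g.comp f) := by
  rw [traceCLM_apply, traceCLM_apply, ContinuousLinearMap.toLinearMap_comp, ContinuousLinearMap.toLinearMap_comp,
    LinearMap.trace_comp_comm']

/-- Let `X` be a smooth, divergence-free vector field on ℝ^{1+n} (coordinate 0
being time) with time component identically 1, and `Y` a smooth vector field with time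
component `Y⁰` such that `[Y,X] = λ·X` for some smooth `λ`. Then `div Y − X(Y⁰)` is a first
integral of `X`. -/
theorem stmt_6 {n : ℕ} (X Y : (Fin (n + 1) → ℝ) → (Fin (n + 1) → ℝ))
    (lam : (Fin (n + 1) → ℝ) → ℝ)
    (hX : ContDiff ℝ (⊤ : ℕ∞) X) (hY : ContDiff ℝ (⊤ : ℕ∞) Y) (hlam : ContDiff ℝ (⊤ : ℕ∞) lam)
    (hXtime : ∀ z, X z 0 = 1)
    (hdivX : ∀ z, vdiv X z = 0)
    (hnorm : ∀ z, lieBracket Y X z = lam z • X z) :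
    ∀ z : Fin (n + 1) → ℝ,
      fderiv ℝ (fun w => vdiv Y w - fderiv ℝ (fun u => Y u 0) w (X w)) z (X z) = 0 := by
  intro z
  have hX1 : Differentiable ℝ X := hX.differentiable (by simp)
  have hY1 : Differentiable ℝ Y := hY.differentiable (by simp)
  have hcX : ContDiff ℝ 1 (fderiv ℝ X) := hX.fderiv_right (WithTop.coe_le_coe.mpr le_top)
  have hcY : ContDiff ℝ 1 (fderiv ℝ Y) := hY.fderiv_right (WithTop.coe_le_coe.mpr le_top)
  have hcX1 : Differentiable ℝ (fderiv ℝ X) := hcX.differentiable one_ne_zero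
  have hcY1 : Differentiable ℝ (fderiv ℝ Y) := hcY.differentiable one_ne_zero
  have hlam1 : Differentiable ℝ lam := hlam.differentiable (by simp)
  -- componentwise derivative
  have hproj : ∀ (F : (Fin (n + 1) → ℝ) → (Fin (n + 1) → ℝ)), Differentiable ℝ F →
      ∀ w v i, fderiv ℝ (fun u => F u i) w v = fderiv ℝ F w v i := by
    intro F hF w v i
    have h : HasFDerivAt (fun u => F u i)
        ((ContinuousLinearMap.proj (R := ℝ) (φ := fun _ : Fin (n + 1) => ℝ) i).comp
          (fderiv ℝ F w)) w :=
      (ContinuousLinearMap.proj (R := ℝ) (φ := fun _ : Fin (n + 1) => ℝ)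
        i).hasFDerivAt.comp w (hF w).hasFDerivAt
    rw [h.fderiv]
    rfl
  -- formula for lam
  have hlamf : ∀ w, lam w = -(fderiv ℝ (fun u => Y u 0) w (X w)) := by
    intro w
    have h0 := congrFun (hnorm w) 0
    simp only [lieBracket, Pi.sub_apply, Pi.smul_apply, hXtime, smul_eq_mul, mul_one] at h0
    have hx0 : fderiv ℝ X w (Y w) 0 = 0 := by
      rw [← hproj X hX1 w (Y w) 0]
      have hc : (fun u => X u 0) = fun _ : Fin (n + 1) → ℝ => (1 : ℝ) := funext hXtime
      rw [hc]
      simp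
    rw [← hproj Y hY1 w (X w) 0, hx0, zero_sub] at h0
    exact h0.symm
  -- derivative of a divergence
  have hdiv_fderiv : ∀ (F : (Fin (n + 1) → ℝ) → (Fin (n + 1) → ℝ)),
      Differentiable ℝ (fderiv ℝ F) →
      ∀ v, fderiv ℝ (fun w => vdiv F w) z v
        = traceCLM (n + 1) (fderiv ℝ (fderiv ℝ F) z v) := by
    intro F hF v
    have h : HasFDerivAt (fun w => vdiv F w)
        ((traceCLM (n + 1)).comp (fderiv ℝ (fderiv ℝ F) z)) z :=
      (traceCLM (n + 1)).hasFDerivAt.comp z (hF z).hasFDerivAt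
    rw [h.fderiv]
    rfl
  -- symmetry of second derivatives
  have hsymX : ∀ v w, fderiv ℝ (fderiv ℝ X) z v w = fderiv ℝ (fderiv ℝ X) z w v :=
    (hX.contDiffAt.isSymmSndFDerivAt (by rw [minSmoothness_of_isRCLikeNormedField]; exact WithTop.coe_le_coe.mpr le_top)).eq
  have hsymY : ∀ v w, fderiv ℝ (fderiv ℝ Y) z v w = fderiv ℝ (fderiv ℝ Y) z w v :=
    (hY.contDiffAt.isSymmSndFDerivAt (by rw [minSmoothness_of_isRCLikeNormedField]; exact WithTop.coe_le_coe.mpr le_top)).eq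
  have hflipX : (fderiv ℝ (fderiv ℝ X) z).flip (Y z) = fderiv ℝ (fderiv ℝ X) z (Y z) :=
    ContinuousLinearMap.ext fun v => by
      rw [ContinuousLinearMap.flip_apply]; exact hsymX v (Y z)
  have hflipY : (fderiv ℝ (fderiv ℝ Y) z).flip (X z) = fderiv ℝ (fderiv ℝ Y) z (X z) :=
    ContinuousLinearMap.ext fun v => by
      rw [ContinuousLinearMap.flip_apply]; exact hsymY v (X z)
  -- function equation from hnorm
  have hfun : (fun w => fderiv ℝ X w (Y w))
      = fun w => fderiv ℝ Y w (X w) + lam w • X w := by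
    funext w
    have h := hnorm w
    simp only [lieBracket] at h
    rw [← h]
    abel
  have hdYX : DifferentiableAt ℝ (fun w => fderiv ℝ Y w (X w)) z :=
    (hcY1 z).clm_apply (hX1 z)
  have hdlX : DifferentiableAt ℝ (fun w => lam w • X w) z :=
    (hlam1 z).smul (hX1 z)
  have key : traceCLM (n + 1) (fderiv ℝ (fun w => fderiv ℝ X w (Y w)) z)
      = traceCLM (n + 1) (fderiv ℝ (fun w => fderiv ℝ Y w (X w)) z)
        + traceCLM (n + 1) (fderiv ℝ (fun w => lam w • X w) z) := by
    rw [show fderiv ℝ (fun w => fderiv ℝ X w (Y w)) z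
        = fderiv ℝ (fun w => fderiv ℝ Y w (X w) + lam w • X w) z by rw [hfun],
      fderiv_fun_add hdYX hdlX, map_add]
  rw [fderiv_clm_apply (hcX1 z) (hY1 z), fderiv_clm_apply (hcY1 z) (hX1 z),
    fderiv_fun_smul (hlam1 z) (hX1 z)] at key
  rw [map_add, map_add, map_add, hflipX, hflipY,
    trace_comp_comm_clm (fderiv ℝ X z) (fderiv ℝ Y z)] at key
  have e1 : traceCLM (n + 1) (fderiv ℝ (fderiv ℝ X) z (Y z)) = 0 := by
    rw [← hdiv_fderiv X hcX1 (Y z)]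
    have hc : (fun w => vdiv X w) = fun _ : Fin (n + 1) → ℝ => (0 : ℝ) := funext hdivX
    rw [hc]
    simp
  have e2 : traceCLM (n + 1) (lam z • fderiv ℝ X z) = 0 := by
    rw [map_smul, ← vdiv_eq, hdivX, smul_zero]
  rw [e1, e2, trace_smulRight, zero_add, add_zero] at key
  have key2 : traceCLM (n + 1) (fderiv ℝ (fderiv ℝ Y) z (X z)) + fderiv ℝ lam z (X z) = 0 := by
    linarith [key]
  -- the goal
  have hgoalfun : (fun w => vdiv Y w - fderiv ℝ (fun u => Y u 0) w (X w))
      = fun w => vdiv Y w + lam w := by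
    funext w
    rw [hlamf w]
    ring
  have hdivY : DifferentiableAt ℝ (fun w => vdiv Y w) z :=
    (traceCLM (n + 1)).differentiableAt.comp z (hcY1 z)
  rw [hgoalfun, fderiv_fun_add hdivY (hlam1 z)]
  simp only [ContinuousLinearMap.add_apply]
  rw [hdiv_fderiv Y hcY1 (X z)]
  linarith [key2]
end

section
/- Let L : ℝ^{1+2n} → ℝ, (t,x,v) ↦ L(t,x,v), be a smooth time-dependent regular Lagrangian, i.e. the Hessian matrix W(t,x,v) with entries W_{ij} = ∂²L/∂vⁱ∂vʲ is invertible at every point, and let Γ be the NSODE vector field Γ(t,x,v) = (1, v, F(t,x,v)), where F : ℝ^{1+2n} → ℝⁿ is smooth and satisfies the Euler–Lagrange relations ∑ⱼ W_{ij}·Fʲ + ∑ⱼ (∂²L/∂vⁱ∂xʲ)·vʲ + ∂²L/∂vⁱ∂t = ∂L/∂xⁱ for all i. Then det W is a Jacobi multiplier for Γ, i.e. Γ(det W) + (det W)·div Γ = 0 identically on ℝ^{1+2n} (here div Γ = ∑ᵢ ∂Fⁱ/∂vⁱ). -/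
/-- The evolution space ℝ^{1+2n} with coordinates (t, x, v). -/
abbrev Evo (n : ℕ) := ℝ × (Fin n → ℝ) × (Fin n → ℝ)

/-- The divergence of a vector field on ℝ^{1+2n}: the trace of its Fréchet derivative. -/
noncomputable def ediv {n : ℕ} (Z : Evo n → Evo n) (p : Evo n) : ℝ :=
  LinearMap.trace ℝ (Evo n) (fderiv ℝ Z p : Evo n →ₗ[ℝ] Evo n)

/-- The NSODE vector field associated with `F`: Γ(t,x,v) = (1, v, F(t,x,v)). -/
def nsode {n : ℕ} (F : Evo n → (Fin n → ℝ)) (p : Evo n) : Evo n :=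
  (1, p.2.2, F p)

/-- The Hessian matrix of a time-dependent Lagrangian with respect to the velocities:
`W i j = ∂²L/∂vⁱ∂vʲ`. -/
noncomputable def hessV {n : ℕ} (L : Evo n → ℝ) (p : Evo n) : Matrix (Fin n) (Fin n) ℝ :=
  Matrix.of fun i j =>
    fderiv ℝ (fun q : Evo n => fderiv ℝ L q (0, 0, Pi.single j 1)) p (0, 0, Pi.single i 1)

set_option maxHeartbeats 1000000
set_option synthInstance.maxHeartbeats 1000000
set_option linter.unusedSectionVars false


open Matrix

variable {n : ℕ}

/-- The determinant as a continuous multilinear map in the rows. -/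
noncomputable def detCM (n : ℕ) : ContinuousMultilinearMap ℝ (fun _ : Fin n => (Fin n → ℝ)) ℝ :=
  MultilinearMap.mkContinuous
    (Matrix.detRowAlternating (R := ℝ) (n := Fin n)).toMultilinearMap (Nat.factorial n)
    (fun m => by
      have hd : (Matrix.detRowAlternating (R := ℝ) (n := Fin n)).toMultilinearMap m
          = (Matrix.of m).det := rfl
      rw [hd, Matrix.det_apply]
      calc ‖∑ σ : Equiv.Perm (Fin n), Equiv.Perm.sign σ • ∏ i, Matrix.of m (σ i) i‖
          ≤ ∑ σ : Equiv.Perm (Fin n), ‖Equiv.Perm.sign σ • ∏ i, Matrix.of m (σ i) i‖ :=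
            norm_sum_le _ _
        _ ≤ ∑ _σ : Equiv.Perm (Fin n), ∏ i, ‖m i‖ := by
            refine Finset.sum_le_sum fun σ _ => ?_
            have h1 : ‖Equiv.Perm.sign σ • ∏ i, Matrix.of m (σ i) i‖
                = ‖∏ i, m (σ i) i‖ := by
              rcases Int.units_eq_one_or (Equiv.Perm.sign σ) with h | h <;>
                simp [h, Matrix.of_apply]
            rw [h1]
            calc ‖∏ i, m (σ i) i‖ = ∏ i, ‖m (σ i) i‖ := by
                  simp [Real.norm_eq_abs, Finset.abs_prod]
              _ ≤ ∏ i, ‖m (σ i)‖ := by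
                  refine Finset.prod_le_prod (fun i _ => norm_nonneg _)
                    (fun i _ => norm_le_pi_norm (m (σ i)) i)
              _ = ∏ i, ‖m i‖ := Equiv.prod_comp σ fun i => ‖m i‖
        _ = (Nat.factorial n) * ∏ i, ‖m i‖ := by
            rw [Finset.sum_const, Finset.card_univ, Fintype.card_perm, Fintype.card_fin,
              nsmul_eq_mul])

theorem detCM_apply (m : Fin n → (Fin n → ℝ)) : detCM n m = (Matrix.of m).det := rfl

/-- `det (updateRow M i r) = ∑ j, adjugate M j i * r j`. -/
theorem det_updateRow_eq (M : Matrix (Fin n) (Fin n) ℝ) (i : Fin n) (r : Fin n → ℝ) :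
    (M.updateRow i r).det = ∑ j, M.adjugate j i * r j := by
  rw [← Matrix.det_transpose, ← Matrix.updateCol_transpose, ← Matrix.cramer_apply,
    Matrix.cramer_eq_adjugate_mulVec, ← Matrix.adjugate_transpose]
  simp [Matrix.mulVec, dotProduct, Matrix.transpose_apply]

/-- Jacobi's formula for a matrix-valued differentiable function, in directional form. -/
theorem fderiv_det_rows {E : Type*} [NormedAddCommGroup E] [NormedSpace ℝ E]
    {g : Fin n → E → (Fin n → ℝ)} {g' : Fin n → E →L[ℝ] (Fin n → ℝ)} {x : E}
    (hg : ∀ i, HasFDerivAt (g i) (g' i) x) (u : E) :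
    fderiv ℝ (fun q => (Matrix.of fun i => g i q).det) x u
      = ∑ i, ((Matrix.of fun i => g i x).updateRow i (g' i u)).det := by
  have h := HasFDerivAt.multilinear_comp (detCM n) hg
  have h2 : fderiv ℝ (fun q => (Matrix.of fun i => g i q).det) x
      = ∑ i, ((detCM n).toContinuousLinearMap (fun j => g j x) i).comp (g' i) := by
    have := h.fderiv
    exact this
  rw [h2]
  simp only [ContinuousLinearMap.sum_apply, ContinuousLinearMap.comp_apply]
  refine Finset.sum_congr rfl fun i _ => ?_
  rfl



section Infra
variable {n : ℕ}

/-- basis directions -/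
def eT : Evo n := (1, 0, 0)
def eX (j : Fin n) : Evo n := (0, Pi.single j 1, 0)
def eV (j : Fin n) : Evo n := (0, 0, Pi.single j 1)

variable {E F G : Type*} [NormedAddCommGroup E] [NormedSpace ℝ E]
  [NormedAddCommGroup F] [NormedSpace ℝ F] [NormedAddCommGroup G] [NormedSpace ℝ G]

theorem hasFDerivAt_eval {g : E → (F →L[ℝ] G)} {g' : E →L[ℝ] (F →L[ℝ] G)} {p : E}
    (hg : HasFDerivAt g g' p) (b : F) :
    HasFDerivAt (fun q => g q b) (g'.flip b) p := by
  have := hg.clm_apply (hasFDerivAt_const b p)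
  simpa using this

theorem fderiv_eval {g : E → (F →L[ℝ] G)} {p : E}
    (hg : DifferentiableAt ℝ g p) (b : F) (u : E) :
    fderiv ℝ (fun q => g q b) p u = fderiv ℝ g p u b := by
  rw [(hasFDerivAt_eval hg.hasFDerivAt b).fderiv]; rfl

end Infra

section Lag
variable {n : ℕ} (L : Evo n → ℝ)

/-- first, second, third derivatives -/
noncomputable def D1 : Evo n → (Evo n →L[ℝ] ℝ) := fderiv ℝ L
noncomputable def D2 : Evo n → (Evo n →L[ℝ] Evo n →L[ℝ] ℝ) := fderiv ℝ (D1 L)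
noncomputable def D3 : Evo n → (Evo n →L[ℝ] Evo n →L[ℝ] Evo n →L[ℝ] ℝ) := fderiv ℝ (D2 L)

variable {L} (hL : ContDiff ℝ (⊤ : ℕ∞) L)
include hL

theorem hD1 : ContDiff ℝ (⊤ : ℕ∞) (D1 L) := (hL.fderiv_right (by simp))
theorem hD2 : ContDiff ℝ (⊤ : ℕ∞) (D2 L) := ((hD1 hL).fderiv_right (by simp))

theorem hasD1 (p : Evo n) : HasFDerivAt L (D1 L p) p :=
  (hL.differentiable (by simp) p).hasFDerivAt
theorem hasD2 (p : Evo n) : HasFDerivAt (D1 L) (D2 L p) p :=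
  ((hD1 hL).differentiable (by simp) p).hasFDerivAt
theorem hasD3 (p : Evo n) : HasFDerivAt (D2 L) (D3 L p) p :=
  ((hD2 hL).differentiable (by simp) p).hasFDerivAt

theorem sym2 (p : Evo n) (a b : Evo n) : D2 L p a b = D2 L p b a :=
  second_derivative_symmetric (fun y => hasD1 hL y) (hasD2 hL p) a b

theorem sym3_12 (p : Evo n) (a b c : Evo n) : D3 L p a b c = D3 L p b a c := by
  have := second_derivative_symmetric (fun y => hasD2 hL y) (hasD3 hL p) a b
  exact congrFun (congrArg _ this) c

/-- derivative of `q ↦ D2 q a b` -/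
theorem hasD2ab (p : Evo n) (a b : Evo n) :
    HasFDerivAt (fun q => D2 L q a b) (((D3 L p).flip a).flip b) p := by
  have h1 : HasFDerivAt (fun q => D2 L q a) ((D3 L p).flip a) p :=
    hasFDerivAt_eval (hasD3 hL p) a
  exact hasFDerivAt_eval h1 b

theorem sym3_23 (p : Evo n) (a b c : Evo n) : D3 L p a b c = D3 L p a c b := by
  have he : (fun q => D2 L q b c) = (fun q => D2 L q c b) := funext fun q => sym2 hL q b c
  have h1 := (hasD2ab hL p b c).fderiv
  have h2 := (hasD2ab hL p c b).fderiv
  rw [he] at h1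
  have h3 := h1.symm.trans h2
  have h4 := congrFun (congrArg DFunLike.coe h3) a
  simpa using h4

theorem sym3_cycle (p : Evo n) (a b c : Evo n) : D3 L p a b c = D3 L p b c a := by
  rw [sym3_12 hL, sym3_23 hL]

end Lag

section Core
variable {n : ℕ} {L : Evo n → ℝ} {F : Evo n → (Fin n → ℝ)}
  (hL : ContDiff ℝ (⊤ : ℕ∞) L) (hF : ContDiff ℝ (⊤ : ℕ∞) F)

/-- projection onto the j-th velocity coordinate, as a CLM -/
noncomputable def piV (j : Fin n) : Evo n →L[ℝ] ℝ :=
  (ContinuousLinearMap.proj j).comp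
    ((ContinuousLinearMap.snd ℝ (Fin n → ℝ) (Fin n → ℝ)).comp
      (ContinuousLinearMap.snd ℝ ℝ ((Fin n → ℝ) × (Fin n → ℝ))))

theorem piV_apply (j : Fin n) (u : Evo n) : piV j u = u.2.2 j := rfl

include hL in
theorem hessV_eq (q : Evo n) :
    hessV L q = Matrix.of fun i j => D2 L q (eV i) (eV j) := by
  ext i j
  show fderiv ℝ (fun r => fderiv ℝ L r (0, 0, Pi.single j 1)) q (0, 0, Pi.single i 1) = _
  have : (fun r => fderiv ℝ L r (0, 0, Pi.single j 1)) = fun r => D1 L r (eV j) := rfl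
  rw [this]
  exact fderiv_eval ((hD1 hL).differentiable (by simp) q) (eV j) (eV i)

include hF in
theorem hFj (p : Evo n) (j : Fin n) :
    HasFDerivAt (fun q => F q j) ((ContinuousLinearMap.proj j).comp (fderiv ℝ F p)) p :=
  hasFDerivAt_pi'.1 (hF.differentiable (by simp) p).hasFDerivAt j

include hL hF in
/-- EL relations differentiated in the direction `eV k`. -/
theorem diffEL
    (hEL' : ∀ q : Evo n, ∀ i,
      (∑ j, D2 L q (eV i) (eV j) * F q j) + (∑ j, D2 L q (eX j) (eV i) * q.2.2 j)
        + D2 L q eT (eV i) = D1 L q (eX i))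
    (p : Evo n) (i k : Fin n) :
    (∑ j, (F p j * D3 L p (eV k) (eV i) (eV j)
        + D2 L p (eV i) (eV j) * fderiv ℝ F p (eV k) j))
      + ((∑ j, p.2.2 j * D3 L p (eV k) (eX j) (eV i)) + D2 L p (eX k) (eV i))
      + D3 L p (eV k) eT (eV i)
      = D2 L p (eV k) (eX i) := by
  have hlhs : HasFDerivAt
      (fun q => (∑ j, D2 L q (eV i) (eV j) * F q j) + (∑ j, D2 L q (eX j) (eV i) * q.2.2 j)
        + D2 L q eT (eV i))
      ((∑ j, (D2 L p (eV i) (eV j) • ((ContinuousLinearMap.proj j).comp (fderiv ℝ F p))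
          + F p j • (((D3 L p).flip (eV i)).flip (eV j))))
        + (∑ j, (D2 L p (eX j) (eV i) • piV j
          + p.2.2 j • (((D3 L p).flip (eX j)).flip (eV i))))
        + ((D3 L p).flip eT).flip (eV i)) p := by
    refine HasFDerivAt.add (HasFDerivAt.add ?_ ?_) (hasD2ab hL p eT (eV i))
    · exact HasFDerivAt.fun_sum fun j _ => (hasD2ab hL p (eV i) (eV j)).fun_mul (hFj hF p j)
    · exact HasFDerivAt.fun_sum fun j _ => (hasD2ab hL p (eX j) (eV i)).fun_mul (piV j).hasFDerivAt
  have hrhs : HasFDerivAt (fun q => D1 L q (eX i)) ((D2 L p).flip (eX i)) p :=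
    hasFDerivAt_eval (hasD2 hL p) (eX i)
  have heq : (fun q => (∑ j, D2 L q (eV i) (eV j) * F q j)
      + (∑ j, D2 L q (eX j) (eV i) * q.2.2 j) + D2 L q eT (eV i))
      = fun q => D1 L q (eX i) := funext fun q => hEL' q i
  have hqd := hlhs.fderiv.symm.trans ((congrArg (fderiv ℝ · p) heq).trans hrhs.fderiv)
  have happ := congrFun (congrArg DFunLike.coe hqd) (eV k)
  simp only [ContinuousLinearMap.add_apply, ContinuousLinearMap.coe_sum',
    Finset.sum_apply, ContinuousLinearMap.smul_apply, ContinuousLinearMap.flip_apply,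
    ContinuousLinearMap.coe_comp', Function.comp_apply, ContinuousLinearMap.proj_apply,
    smul_eq_mul, piV_apply] at happ
  rw [Finset.sum_add_distrib, Finset.sum_add_distrib] at happ
  have hsingle : (∑ j, D2 L p (eX j) (eV i) * (eV (n := n) k).2.2 j)
      = D2 L p (eX k) (eV i) := by
    simp [eV, Pi.single_apply, Finset.sum_ite_eq']
  rw [hsingle] at happ
  rw [Finset.sum_add_distrib]
  linarith [happ]

end Core

section Part4
set_option synthInstance.maxHeartbeats 1000000
set_option maxHeartbeats 1000000
variable {n : ℕ} {L : Evo n → ℝ} {F : Evo n → (Fin n → ℝ)}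
  (hL : ContDiff ℝ (⊤ : ℕ∞) L) (hF : ContDiff ℝ (⊤ : ℕ∞) F)

include hL in
theorem gamma_D3 (p : Evo n) (a b : Evo n) :
    D3 L p (1, p.2.2, F p) a b = D3 L p eT a b + (∑ j, p.2.2 j * D3 L p (eX j) a b)
      + ∑ j, F p j * D3 L p (eV j) a b := by
  have hdec : ((1, p.2.2, F p) : Evo n)
      = eT + (∑ j, p.2.2 j • eX j) + (∑ j, F p j • eV j) := by
    refine Prod.ext ?_ (Prod.ext ?_ ?_)
    · simp [eT, eX, eV, Prod.fst_sum]
    · funext l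
      simp [eT, eX, eV, Prod.fst_sum, Prod.snd_sum, Finset.sum_apply,
        Pi.single_apply, Finset.sum_ite_eq']
    · funext l
      simp [eT, eX, eV, Prod.fst_sum, Prod.snd_sum, Finset.sum_apply,
        Pi.single_apply, Finset.sum_ite_eq']
  rw [hdec]
  simp only [map_add, map_sum, _root_.map_smul, ContinuousLinearMap.add_apply,
    ContinuousLinearMap.coe_sum', Finset.sum_apply, ContinuousLinearMap.smul_apply,
    smul_eq_mul]

include hL hF in
theorem keyM
    (hEL' : ∀ q : Evo n, ∀ i,
      (∑ j, D2 L q (eV i) (eV j) * F q j) + (∑ j, D2 L q (eX j) (eV i) * q.2.2 j)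
        + D2 L q eT (eV i) = D1 L q (eX i))
    (p : Evo n) (i k : Fin n) :
    D3 L p (1, p.2.2, F p) (eV i) (eV k)
      = (D2 L p (eX i) (eV k) - D2 L p (eX k) (eV i))
        - ∑ j, D2 L p (eV i) (eV j) * fderiv ℝ F p (eV k) j := by
  have hd := diffEL hL hF hEL' p i k
  rw [Finset.sum_add_distrib] at hd
  have e1 : ∀ j, D3 L p (eV k) (eV i) (eV j) = D3 L p (eV j) (eV i) (eV k) := fun j => by
    rw [sym3_cycle hL, sym3_12 hL]
  have e2 : ∀ j, D3 L p (eV k) (eX j) (eV i) = D3 L p (eX j) (eV i) (eV k) := fun j => by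
    rw [sym3_cycle hL]
  have e3 : D3 L p (eV k) eT (eV i) = D3 L p eT (eV i) (eV k) := by rw [sym3_cycle hL]
  have e4 : D2 L p (eV k) (eX i) = D2 L p (eX i) (eV k) := sym2 hL p _ _
  simp only [e1, e2, e3, e4] at hd
  rw [gamma_D3 hL p (eV i) (eV k)]
  linarith [hd]

/-- `∑ i, det (updateRow M i (H i)) = trace (adjugate M * H)` -/
theorem sum_det_updateRow (M H : Matrix (Fin n) (Fin n) ℝ) :
    (∑ i, (M.updateRow i (H i)).det) = Matrix.trace (M.adjugate * H) := by
  simp only [det_updateRow_eq, Matrix.trace, Matrix.diag, Matrix.mul_apply]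
  rw [Finset.sum_comm]

theorem trace_symm_mul_antisymm (S A : Matrix (Fin n) (Fin n) ℝ)
    (hS : Sᵀ = S) (hA : Aᵀ = -A) : Matrix.trace (S * A) = 0 := by
  have h1 : Matrix.trace (S * A) = Matrix.trace ((S * A)ᵀ) := (Matrix.trace_transpose _).symm
  rw [Matrix.transpose_mul, hS, hA, Matrix.neg_mul, Matrix.trace_neg,
    Matrix.trace_mul_comm] at h1
  rw [Matrix.trace_mul_comm]
  linarith

include hF in
theorem ediv_nsode (p : Evo n) :
    ediv (nsode F) p = ∑ j, fderiv ℝ F p (eV j) j := by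
  set sndsnd : Evo n →L[ℝ] (Fin n → ℝ) :=
    (ContinuousLinearMap.snd ℝ (Fin n → ℝ) (Fin n → ℝ)).comp
      (ContinuousLinearMap.snd ℝ ℝ ((Fin n → ℝ) × (Fin n → ℝ))) with hsnd
  have hZ : HasFDerivAt (nsode F)
      (ContinuousLinearMap.prod 0 (ContinuousLinearMap.prod sndsnd (fderiv ℝ F p))) p := by
    exact HasFDerivAt.prodMk (hasFDerivAt_const (1 : ℝ) p)
      (HasFDerivAt.prodMk sndsnd.hasFDerivAt (hF.differentiable (by simp) p).hasFDerivAt)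
  rw [ediv, hZ.fderiv]
  set b : Module.Basis (Unit ⊕ (Fin n ⊕ Fin n)) ℝ (Evo n) :=
    (Module.Basis.singleton Unit ℝ).prod ((Pi.basisFun ℝ (Fin n)).prod (Pi.basisFun ℝ (Fin n)))
    with hb
  rw [LinearMap.trace_eq_matrix_trace ℝ b]
  rw [Matrix.trace]
  rw [Fintype.sum_sum_type]
  simp only [Matrix.diag, LinearMap.toMatrix_apply]
  have hb1 : b (Sum.inl ()) = ((1 : ℝ), 0, 0) := by
    refine Prod.ext ?_ (Prod.ext ?_ ?_) <;> simp [hb]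
  have hb2 : ∀ j, b (Sum.inr (Sum.inl j)) = ((0 : ℝ), Pi.single j 1, 0) := by
    intro j; refine Prod.ext ?_ (Prod.ext ?_ ?_) <;> simp [hb]
  have hb3 : ∀ j, b (Sum.inr (Sum.inr j)) = eV j := by
    intro j; refine Prod.ext ?_ (Prod.ext ?_ ?_) <;> simp [hb, eV]
  simp only [hb1, hb2, hb3]
  simp [hb, Module.Basis.prod_repr_inl, Module.Basis.prod_repr_inr, Pi.basisFun_repr, eV,
    ContinuousLinearMap.prod_apply, Module.Basis.singleton_repr, hsnd,
    ContinuousLinearMap.coe_comp', Function.comp, ContinuousLinearMap.coe_snd']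

end Part4

/-- For a smooth time-dependent regular Lagrangian `L(t,x,v)` on ℝ^{1+2n}
(Hessian `W` in the velocities invertible everywhere) and the NSODE vector field
`Γ(t,x,v) = (1, v, F(t,x,v))` with `F` smooth satisfying the Euler–Lagrange relations
`∑ⱼ W_{ij}·Fʲ + ∑ⱼ (∂²L/∂vⁱ∂xʲ)·vʲ + ∂²L/∂vⁱ∂t = ∂L/∂xⁱ`, the determinant `det W` is a
Jacobi multiplier for `Γ`: `Γ(det W) + (det W)·div Γ = 0` identically. -/
theorem stmt_13 {n : ℕ} (L : Evo n → ℝ) (F : Evo n → (Fin n → ℝ))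
    (hL : ContDiff ℝ (⊤ : ℕ∞) L) (hF : ContDiff ℝ (⊤ : ℕ∞) F)
    (hreg : ∀ p, IsUnit (hessV L p))
    (hEL : ∀ p : Evo n, ∀ i,
      (∑ j, hessV L p i j * F p j) +
      (∑ j, fderiv ℝ (fun q : Evo n => fderiv ℝ L q (0, 0, Pi.single i 1)) p
          (0, Pi.single j 1, 0) * p.2.2 j) +
      fderiv ℝ (fun q : Evo n => fderiv ℝ L q (0, 0, Pi.single i 1)) p (1, 0, 0)
        = fderiv ℝ L p (0, Pi.single i 1, 0)) :
    ∀ p : Evo n,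
      fderiv ℝ (fun q => (hessV L q).det) p (nsode F p) +
        (hessV L p).det * ediv (nsode F) p = 0 := by
  have hWof : ∀ q, hessV L q = Matrix.of fun i j => D2 L q (eV i) (eV j) := hessV_eq hL
  have hEL' : ∀ q : Evo n, ∀ i,
      (∑ j, D2 L q (eV i) (eV j) * F q j) + (∑ j, D2 L q (eX j) (eV i) * q.2.2 j)
        + D2 L q eT (eV i) = D1 L q (eX i) := by
    intro q i
    have h := hEL q i
    have h1 : ∀ j, hessV L q i j = D2 L q (eV i) (eV j) := fun j => by rw [hWof q]; rfl
    have hfn : (fun r : Evo n => fderiv ℝ L r (0, 0, Pi.single i 1))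
        = fun r => D1 L r (eV i) := rfl
    have h2 : ∀ j, fderiv ℝ (fun r : Evo n => fderiv ℝ L r (0, 0, Pi.single i 1)) q
        (0, Pi.single j 1, 0) = D2 L q (eX j) (eV i) := fun j => by
      rw [hfn]; exact fderiv_eval ((hD1 hL).differentiable (by simp) q) (eV i) (eX j)
    have h3 : fderiv ℝ (fun r : Evo n => fderiv ℝ L r (0, 0, Pi.single i 1)) q (1, 0, 0)
        = D2 L q eT (eV i) := by
      rw [hfn]; exact fderiv_eval ((hD1 hL).differentiable (by simp) q) (eV i) eT
    simp only [h1, h2, h3] at h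
    exact h
  intro p
  set Wm := hessV L p with hWm
  set Am : Matrix (Fin n) (Fin n) ℝ :=
    Matrix.of fun i k => D2 L p (eX i) (eV k) - D2 L p (eX k) (eV i) with hAm
  set Bm : Matrix (Fin n) (Fin n) ℝ :=
    Matrix.of fun j k => fderiv ℝ F p (eV k) j with hBm
  have hg : ∀ i, HasFDerivAt (fun q => (fun j => D2 L q (eV i) (eV j)))
      (ContinuousLinearMap.pi fun j => ((D3 L p).flip (eV i)).flip (eV j)) p :=
    fun i => hasFDerivAt_pi.2 fun j => hasD2ab hL p (eV i) (eV j)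
  have hrow : ∀ i, (fun j => D3 L p (nsode F p) (eV i) (eV j)) = (Am - Wm * Bm) i := by
    intro i; funext k
    show D3 L p (1, p.2.2, F p) (eV i) (eV k) = _
    rw [keyM hL hF hEL' p i k]
    simp only [hAm, hBm, hWm, hWof p, Matrix.sub_apply, Matrix.mul_apply, Matrix.of_apply]
  have hdet2 : fderiv ℝ (fun q => (hessV L q).det) p (nsode F p)
      = Matrix.trace (Wm.adjugate * (Am - Wm * Bm)) := by
    have hfun : (fun q => (hessV L q).det)
        = fun q => (Matrix.of fun i => (fun j => D2 L q (eV i) (eV j))).det := by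
      funext q; rw [hWof q]
    rw [hfun, fderiv_det_rows hg (nsode F p), ← sum_det_updateRow]
    refine Finset.sum_congr rfl fun i _ => ?_
    rw [show (Matrix.of fun i => (fun j => D2 L p (eV i) (eV j))) = Wm from (hWof p).symm,
      ← hrow i]
    rfl
  have hWsymm : Wmᵀ = Wm := by
    ext i j
    simp only [hWm, hWof p, Matrix.transpose_apply, Matrix.of_apply]
    exact sym2 hL p _ _
  have hAanti : Amᵀ = -Am := by
    ext i j
    simp only [hAm, Matrix.transpose_apply, Matrix.neg_apply, Matrix.of_apply]
    ring
  have hadj : Matrix.trace (Wm.adjugate * Am) = 0 := by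
    refine trace_symm_mul_antisymm _ _ ?_ hAanti
    rw [Matrix.adjugate_transpose, hWsymm]
  have htr2 : Matrix.trace (Wm.adjugate * (Wm * Bm)) = Wm.det * Matrix.trace Bm := by
    rw [← Matrix.mul_assoc, Matrix.adjugate_mul, Matrix.smul_mul, Matrix.one_mul,
      Matrix.trace_smul, smul_eq_mul]
  have hediv : ediv (nsode F) p = Matrix.trace Bm := by
    rw [ediv_nsode hF p]
    simp [hBm, Matrix.trace, Matrix.diag]
  rw [hdet2, Matrix.mul_sub, Matrix.trace_sub, hadj, htr2, hediv]
  ring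
end

section
/- Let L : ℝ^{1+2n} → ℝ be a smooth time-dependent regular Lagrangian with Hessian matrix W (entries W_{ij} = ∂²L/∂vⁱ∂vʲ) invertible and det W > 0 everywhere, and let Γ be the NSODE vector field Γ(t,x,v) = (1, v, F(t,x,v)), where F is smooth and satisfies ∑ⱼ W_{ij}·Fʲ + ∑ⱼ (∂²L/∂vⁱ∂xʲ)·vʲ + ∂²L/∂vⁱ∂t = ∂L/∂xⁱ for all i. Let X⁰, X¹,…,Xⁿ : ℝ^{1+n} → ℝ be smooth functions of (t,x) only, and let X^{(1)} be the vector field on ℝ^{1+2n} with components (X⁰, X¹,…,Xⁿ, X̄¹,…,X̄ⁿ), where X̄ⁱ = Γ(Xⁱ) − vⁱ·Γ(X⁰). If [X^{(1)}, Γ] = h·Γ for some smooth function h, then the function I = 2∑ᵢ(∂Xⁱ/∂xⁱ − vⁱ·∂X⁰/∂xⁱ) − n·Γ(X⁰) + X^{(1)}(log det W) is a first integral of Γ, i.e. Γ(I) = 0 identically. -/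
/-- The Lie bracket of vector fields: [Z,Y](p) = DY(p)(Z(p)) − DZ(p)(Y(p)). -/
noncomputable def elieBracket {n : ℕ} (Z Y : Evo n → Evo n) (p : Evo n) : Evo n :=
  fderiv ℝ Y p (Z p) - fderiv ℝ Z p (Y p)

/-- The first prolongation `X^{(1)}` of a vector field `(X⁰, Xⁱ)` on ℝ^{1+n} depending only
on `(t,x)`: its components are `(X⁰, Xⁱ, X̄ⁱ)` with `X̄ⁱ = Γ(Xⁱ) − vⁱ·Γ(X⁰)`. -/
noncomputable def prolong {n : ℕ} (F : Evo n → (Fin n → ℝ))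
    (X0 : ℝ × (Fin n → ℝ) → ℝ) (Xv : ℝ × (Fin n → ℝ) → (Fin n → ℝ)) (p : Evo n) : Evo n :=
  (X0 (p.1, p.2.1), Xv (p.1, p.2.1),
    fun i => fderiv ℝ (fun q : Evo n => Xv (q.1, q.2.1) i) p (nsode F p)
      - p.2.2 i * fderiv ℝ (fun q : Evo n => X0 (q.1, q.2.1)) p (nsode F p))

set_option linter.unusedSectionVars false
set_option linter.unusedVariables false


namespace Aux
variable {n : ℕ}

/-- directional derivative -/
noncomputable def pd (u : Evo n) (g : Evo n → ℝ) (p : Evo n) : ℝ := fderiv ℝ g p u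

def et (n : ℕ) : Evo n := (1, 0, 0)
def ex (i : Fin n) : Evo n := (0, Pi.single i 1, 0)
def ev (i : Fin n) : Evo n := (0, 0, Pi.single i 1)

lemma decomp (w : Evo n) :
    w = w.1 • et n + ((∑ i, w.2.1 i • ex i) + ∑ i, w.2.2 i • ev i) := by
  refine Prod.ext ?_ (Prod.ext ?_ ?_)
  · simp [et, ex, ev, Prod.fst_sum]
  · funext a
    simp [et, ex, ev, Prod.fst_sum, Prod.snd_sum, Finset.sum_apply, Pi.single_apply]
  · funext a
    simp [et, ex, ev, Prod.fst_sum, Prod.snd_sum, Finset.sum_apply, Pi.single_apply]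

lemma clm_expand (T : Evo n →L[ℝ] ℝ) (w : Evo n) :
    T w = w.1 * T (et n) + ((∑ i, w.2.1 i * T (ex i)) + ∑ i, w.2.2 i * T (ev i)) := by
  conv_lhs => rw [decomp w]
  simp [map_add, map_sum, map_smul]

lemma fderiv_expand (g : Evo n → ℝ) (p w : Evo n) :
    fderiv ℝ g p w
      = w.1 * pd (et n) g p + ((∑ i, w.2.1 i * pd (ex i) g p) + ∑ i, w.2.2 i * pd (ev i) g p) :=
  clm_expand _ _

lemma pd_contDiff {g : Evo n → ℝ} (hg : ContDiff ℝ (⊤ : ℕ∞) g) (u : Evo n) :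
    ContDiff ℝ (⊤ : ℕ∞) (pd u g) :=
  (hg.fderiv_right (le_of_eq (by simp))).clm_apply contDiff_const

end Aux

namespace Aux
variable {n : ℕ}

lemma pd_add {f g : Evo n → ℝ} {p : Evo n} (hf : DifferentiableAt ℝ f p)
    (hg : DifferentiableAt ℝ g p) (u : Evo n) :
    pd u (fun q => f q + g q) p = pd u f p + pd u g p := by
  unfold pd; rw [fderiv_fun_add hf hg]; rfl

lemma pd_sub {f g : Evo n → ℝ} {p : Evo n} (hf : DifferentiableAt ℝ f p)
    (hg : DifferentiableAt ℝ g p) (u : Evo n) :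
    pd u (fun q => f q - g q) p = pd u f p - pd u g p := by
  unfold pd; rw [fderiv_fun_sub hf hg]; rfl

lemma pd_neg {f : Evo n → ℝ} {p : Evo n} (u : Evo n) :
    pd u (fun q => -f q) p = - pd u f p := by
  unfold pd; rw [fderiv_fun_neg]; rfl

lemma pd_mul {f g : Evo n → ℝ} {p : Evo n} (hf : DifferentiableAt ℝ f p)
    (hg : DifferentiableAt ℝ g p) (u : Evo n) :
    pd u (fun q => f q * g q) p = pd u f p * g p + f p * pd u g p := by
  unfold pd; rw [fderiv_fun_mul hf hg]; simp [smul_eq_mul]; ring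

lemma pd_const (c : ℝ) (u p : Evo n) : pd u (fun _ => c) p = 0 := by
  unfold pd; rw [fderiv_fun_const]; rfl

lemma pd_const_mul {f : Evo n → ℝ} {p : Evo n} (hf : DifferentiableAt ℝ f p) (c : ℝ) (u : Evo n) :
    pd u (fun q => c * f q) p = c * pd u f p := by
  rw [pd_mul (differentiableAt_const c) hf, pd_const]; ring

lemma pd_sum {ι : Type*} (s : Finset ι) {f : ι → Evo n → ℝ} {p : Evo n}
    (hf : ∀ i ∈ s, DifferentiableAt ℝ (f i) p) (u : Evo n) :
    pd u (fun q => ∑ i ∈ s, f i q) p = ∑ i ∈ s, pd u (f i) p := by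
  unfold pd; rw [fderiv_fun_sum hf]; simp

/-- coordinate CLMs -/
def Ct (n : ℕ) : Evo n →L[ℝ] ℝ := ContinuousLinearMap.fst ℝ ℝ _
noncomputable def Cx (i : Fin n) : Evo n →L[ℝ] ℝ :=
  ((ContinuousLinearMap.proj i).comp (ContinuousLinearMap.fst ℝ _ _)).comp
    (ContinuousLinearMap.snd ℝ ℝ _)
noncomputable def Cv (i : Fin n) : Evo n →L[ℝ] ℝ :=
  ((ContinuousLinearMap.proj i).comp (ContinuousLinearMap.snd ℝ _ _)).comp
    (ContinuousLinearMap.snd ℝ ℝ _)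

lemma pd_coord_t (u p : Evo n) : pd u (fun q => q.1) p = u.1 := by
  have : (fun q : Evo n => q.1) = fun q => Ct n q := rfl
  unfold pd; rw [this, ContinuousLinearMap.fderiv]; rfl

lemma pd_coord_x (i : Fin n) (u p : Evo n) : pd u (fun q => q.2.1 i) p = u.2.1 i := by
  have : (fun q : Evo n => q.2.1 i) = fun q => Cx i q := rfl
  unfold pd; rw [this, ContinuousLinearMap.fderiv]; rfl

lemma pd_coord_v (i : Fin n) (u p : Evo n) : pd u (fun q => q.2.2 i) p = u.2.2 i := by
  have : (fun q : Evo n => q.2.2 i) = fun q => Cv i q := rfl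
  unfold pd; rw [this, ContinuousLinearMap.fderiv]; rfl

/-- Chain rule for `q ↦ (fderiv g q) (Z q)`. -/
lemma fderiv_fderiv_apply {g : Evo n → ℝ} {Z : Evo n → Evo n} {p : Evo n}
    (hg : ContDiffAt ℝ (⊤ : ℕ∞) g p) (hZ : DifferentiableAt ℝ Z p) (u : Evo n) :
    fderiv ℝ (fun q => fderiv ℝ g q (Z q)) p u
      = fderiv ℝ (fderiv ℝ g) p u (Z p) + fderiv ℝ g p (fderiv ℝ Z p u) := by
  have h1 : HasFDerivAt (fderiv ℝ g) (fderiv ℝ (fderiv ℝ g) p) p := by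
    refine ((ContDiffAt.fderiv_right hg (m := (⊤ : ℕ∞)) (by norm_cast)).differentiableAt
      (by norm_cast)).hasFDerivAt
  have h2 : HasFDerivAt Z (fderiv ℝ Z p) p := hZ.hasFDerivAt
  rw [(h1.clm_apply h2).fderiv]
  simp [ContinuousLinearMap.add_apply, ContinuousLinearMap.comp_apply,
    ContinuousLinearMap.flip_apply]
  abel

/-- Schwarz symmetry for `pd`. -/
lemma pd_pd_symm {g : Evo n → ℝ} {p : Evo n} (hg : ContDiffAt ℝ (⊤ : ℕ∞) g p) (u w : Evo n) :
    pd u (pd w g) p = pd w (pd u g) p := by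
  have e : ∀ a b : Evo n, pd a (pd b g) p = fderiv ℝ (fderiv ℝ g) p a b := by
    intro a b
    have := fderiv_fderiv_apply (Z := fun _ => b) hg (differentiableAt_const b) a
    unfold pd
    rw [this]
    simp
  rw [e u w, e w u]
  exact (hg.isSymmSndFDerivAt (by rw [minSmoothness_of_isRCLikeNormedField]; exact WithTop.coe_le_coe.2 le_top)).eq u w

end Aux

namespace Aux
variable {n : ℕ}

/-- projection to base (t,x) as a CLM -/
noncomputable def Pb (n : ℕ) : Evo n →L[ℝ] (ℝ × (Fin n → ℝ)) :=
  (ContinuousLinearMap.fst ℝ ℝ _).prod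
    ((ContinuousLinearMap.fst ℝ _ _).comp (ContinuousLinearMap.snd ℝ ℝ _))

lemma Pb_apply (q : Evo n) : Pb n q = (q.1, q.2.1) := rfl

lemma base_contDiff {ψ : ℝ × (Fin n → ℝ) → ℝ} (hψ : ContDiff ℝ (⊤ : ℕ∞) ψ) :
    ContDiff ℝ (⊤ : ℕ∞) (fun q : Evo n => ψ (q.1, q.2.1)) :=
  hψ.comp (Pb n).contDiff

lemma pd_base {ψ : ℝ × (Fin n → ℝ) → ℝ} {p : Evo n}
    (hψ : DifferentiableAt ℝ ψ (p.1, p.2.1)) (u : Evo n) :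
    pd u (fun q : Evo n => ψ (q.1, q.2.1)) p = fderiv ℝ ψ (p.1, p.2.1) (u.1, u.2.1) := by
  have : (fun q : Evo n => ψ (q.1, q.2.1)) = ψ ∘ (Pb n) := rfl
  unfold pd
  rw [this, (hψ.hasFDerivAt.comp p (Pb n).hasFDerivAt).fderiv]
  rfl

lemma pd_ev_base {ψ : ℝ × (Fin n → ℝ) → ℝ} {p : Evo n}
    (hψ : DifferentiableAt ℝ ψ (p.1, p.2.1)) (i : Fin n) :
    pd (ev i) (fun q : Evo n => ψ (q.1, q.2.1)) p = 0 := by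
  rw [pd_base hψ]
  have : ((ev i : Evo n).1, (ev i : Evo n).2.1) = (0 : ℝ × (Fin n → ℝ)) := by
    simp [ev]
  rw [this, map_zero]

/-- component extraction through fderiv of a vector field -/
lemma fderiv_comp_clm {Y : Evo n → Evo n} {p : Evo n} (hY : DifferentiableAt ℝ Y p)
    (C : Evo n →L[ℝ] ℝ) (u : Evo n) :
    C (fderiv ℝ Y p u) = fderiv ℝ (fun q => C (Y q)) p u := by
  rw [show (fun q => C (Y q)) = (⇑C) ∘ Y from rfl,
    (C.hasFDerivAt.comp p hY.hasFDerivAt).fderiv]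
  rfl

/-- `fderiv` of second derivative evaluation. -/
lemma pd_eval {g : Evo n → ℝ} {p : Evo n} (hg : ContDiffAt ℝ (⊤ : ℕ∞) g p) (u w : Evo n) :
    fderiv ℝ (fun q => fderiv ℝ g q w) p u = fderiv ℝ (fderiv ℝ g) p u w := by
  have := fderiv_fderiv_apply (Z := fun _ => w) hg (differentiableAt_const w) u
  rw [this]
  simp

/-- key commutator: derivative of `q ↦ dg(Z q)` in direction `u`. -/
lemma pd_vdZ {g : Evo n → ℝ} {Z : Evo n → Evo n} {p : Evo n}
    (hg : ContDiffAt ℝ (⊤ : ℕ∞) g p) (hZ : DifferentiableAt ℝ Z p) (u : Evo n) :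
    pd u (fun q => fderiv ℝ g q (Z q)) p
      = fderiv ℝ (pd u g) p (Z p) + fderiv ℝ g p (fderiv ℝ Z p u) := by
  unfold pd
  rw [fderiv_fderiv_apply hg hZ u, pd_eval hg (Z p) u]
  congr 1
  exact ((hg.isSymmSndFDerivAt (by rw [minSmoothness_of_isRCLikeNormedField]; exact WithTop.coe_le_coe.2 le_top)).eq u (Z p))

end Aux

namespace Aux
variable {n : ℕ}

def X0c (X0 : ℝ × (Fin n → ℝ) → ℝ) : Evo n → ℝ := fun q => X0 (q.1, q.2.1)
def Xic (Xv : ℝ × (Fin n → ℝ) → Fin n → ℝ) (i : Fin n) : Evo n → ℝ := fun q => Xv (q.1, q.2.1) i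
def Fc (F : Evo n → Fin n → ℝ) (i : Fin n) : Evo n → ℝ := fun q => F q i

/-- derivative along Γ -/
noncomputable def Gd (F : Evo n → Fin n → ℝ) (g : Evo n → ℝ) : Evo n → ℝ :=
  fun p => fderiv ℝ g p (nsode F p)

/-- derivative along X^{(1)} -/
noncomputable def Xd (F : Evo n → Fin n → ℝ) (X0 : ℝ × (Fin n → ℝ) → ℝ)
    (Xv : ℝ × (Fin n → ℝ) → Fin n → ℝ) (g : Evo n → ℝ) : Evo n → ℝ :=
  fun p => fderiv ℝ g p (prolong F X0 Xv p)

noncomputable def Xbar (F : Evo n → Fin n → ℝ) (X0 : ℝ × (Fin n → ℝ) → ℝ)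
    (Xv : ℝ × (Fin n → ℝ) → Fin n → ℝ) (i : Fin n) : Evo n → ℝ :=
  fun p => Gd F (Xic Xv i) p - p.2.2 i * Gd F (X0c X0) p

lemma Xbar_eq_prolong (F : Evo n → Fin n → ℝ) (X0 : ℝ × (Fin n → ℝ) → ℝ)
    (Xv : ℝ × (Fin n → ℝ) → Fin n → ℝ) (i : Fin n) (p : Evo n) :
    (prolong F X0 Xv p).2.2 i = Xbar F X0 Xv i p := rfl

noncomputable def Lv (L : Evo n → ℝ) (i : Fin n) : Evo n → ℝ := pd (ev i) L

noncomputable def Wf (L : Evo n → ℝ) (i j : Fin n) : Evo n → ℝ := pd (ev i) (Lv L j)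

lemma Wf_eq_hessV (L : Evo n → ℝ) (p : Evo n) (i j : Fin n) :
    hessV L p i j = Wf L i j p := rfl

noncomputable def divG (F : Evo n → Fin n → ℝ) : Evo n → ℝ :=
  fun p => ∑ i, pd (ev i) (Fc F i) p

section Smooth
variable {L : Evo n → ℝ} {F : Evo n → Fin n → ℝ}
  {X0 : ℝ × (Fin n → ℝ) → ℝ} {Xv : ℝ × (Fin n → ℝ) → Fin n → ℝ}

lemma X0c_contDiff (hX0 : ContDiff ℝ (⊤ : ℕ∞) X0) : ContDiff ℝ (⊤ : ℕ∞) (X0c (n := n) X0) :=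
  base_contDiff hX0

lemma Xic_contDiff (hXv : ContDiff ℝ (⊤ : ℕ∞) Xv) (i : Fin n) : ContDiff ℝ (⊤ : ℕ∞) (Xic Xv i) :=
  base_contDiff ((contDiff_apply ℝ ℝ i).comp hXv)

lemma Fc_contDiff (hF : ContDiff ℝ (⊤ : ℕ∞) F) (i : Fin n) : ContDiff ℝ (⊤ : ℕ∞) (Fc F i) :=
  (contDiff_apply ℝ ℝ i).comp hF

lemma nsode_contDiff (hF : ContDiff ℝ (⊤ : ℕ∞) F) : ContDiff ℝ (⊤ : ℕ∞) (nsode F) :=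
  contDiff_const.prodMk ((contDiff_snd.comp contDiff_snd).prodMk hF)

lemma Gd_contDiff (hF : ContDiff ℝ (⊤ : ℕ∞) F) {g : Evo n → ℝ} (hg : ContDiff ℝ (⊤ : ℕ∞) g) :
    ContDiff ℝ (⊤ : ℕ∞) (Gd F g) :=
  (hg.fderiv_right (le_of_eq (by norm_cast))).clm_apply (nsode_contDiff hF)

lemma Xbar_contDiff (hF : ContDiff ℝ (⊤ : ℕ∞) F) (hX0 : ContDiff ℝ (⊤ : ℕ∞) X0)
    (hXv : ContDiff ℝ (⊤ : ℕ∞) Xv) (i : Fin n) : ContDiff ℝ (⊤ : ℕ∞) (Xbar F X0 Xv i) :=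
  (Gd_contDiff hF (Xic_contDiff hXv i)).sub
    (((Cv i).contDiff).mul (Gd_contDiff hF (X0c_contDiff hX0)))

lemma prolong_contDiff (hF : ContDiff ℝ (⊤ : ℕ∞) F) (hX0 : ContDiff ℝ (⊤ : ℕ∞) X0)
    (hXv : ContDiff ℝ (⊤ : ℕ∞) Xv) : ContDiff ℝ (⊤ : ℕ∞) (prolong F X0 Xv) :=
  (X0c_contDiff hX0).prodMk ((hXv.comp (Pb n).contDiff).prodMk
    (contDiff_pi.2 fun i => Xbar_contDiff hF hX0 hXv i))

lemma Xd_contDiff (hF : ContDiff ℝ (⊤ : ℕ∞) F) (hX0 : ContDiff ℝ (⊤ : ℕ∞) X0)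
    (hXv : ContDiff ℝ (⊤ : ℕ∞) Xv) {g : Evo n → ℝ} (hg : ContDiff ℝ (⊤ : ℕ∞) g) :
    ContDiff ℝ (⊤ : ℕ∞) (Xd F X0 Xv g) :=
  (hg.fderiv_right (le_of_eq (by norm_cast))).clm_apply (prolong_contDiff hF hX0 hXv)

lemma Lv_contDiff (hL : ContDiff ℝ (⊤ : ℕ∞) L) (i : Fin n) : ContDiff ℝ (⊤ : ℕ∞) (Lv L i) :=
  pd_contDiff hL _

lemma Wf_contDiff (hL : ContDiff ℝ (⊤ : ℕ∞) L) (i j : Fin n) : ContDiff ℝ (⊤ : ℕ∞) (Wf L i j) :=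
  pd_contDiff (Lv_contDiff hL j) _

lemma divG_contDiff (hF : ContDiff ℝ (⊤ : ℕ∞) F) : ContDiff ℝ (⊤ : ℕ∞) (divG F) :=
  ContDiff.sum fun i _ => pd_contDiff (Fc_contDiff hF i) _

lemma detW_contDiff (hL : ContDiff ℝ (⊤ : ℕ∞) L) :
    ContDiff ℝ (⊤ : ℕ∞) (fun p => (hessV L p).det) := by
  have : (fun p : Evo n => (hessV L p).det)
      = fun p => ∑ σ : Equiv.Perm (Fin n), (Equiv.Perm.sign σ : ℝ) * ∏ i, Wf L (σ i) i p := by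
    funext p
    rw [Matrix.det_apply']
    simp [Wf_eq_hessV]
  rw [this]
  exact ContDiff.sum fun σ _ => contDiff_const.mul (contDiff_prod fun i _ => Wf_contDiff hL _ _)

end Smooth
end Aux

namespace Aux
variable {n : ℕ} {L : Evo n → ℝ} {F : Evo n → Fin n → ℝ}
  {X0 : ℝ × (Fin n → ℝ) → ℝ} {Xv : ℝ × (Fin n → ℝ) → Fin n → ℝ} {h : Evo n → ℝ}

lemma Gd_expand (g : Evo n → ℝ) (p : Evo n) :
    Gd F g p = pd (et n) g p
      + ((∑ j, p.2.2 j * pd (ex j) g p) + ∑ j, F p j * pd (ev j) g p) := by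
  have := fderiv_expand g p (nsode F p)
  unfold Gd
  rw [this]
  simp [nsode]

lemma Xd_expand (g : Evo n → ℝ) (p : Evo n) :
    Xd F X0 Xv g p = X0c X0 p * pd (et n) g p
      + ((∑ j, Xic Xv j p * pd (ex j) g p) + ∑ j, Xbar F X0 Xv j p * pd (ev j) g p) := by
  have := fderiv_expand g p (prolong F X0 Xv p)
  unfold Xd
  rw [this]
  rfl

/-- commutator of `pd u` with `Gd`. -/
lemma pd_Gd {g : Evo n → ℝ} (hg : ContDiff ℝ (⊤ : ℕ∞) g) (hF : ContDiff ℝ (⊤ : ℕ∞) F)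
    (u : Evo n) (p : Evo n) :
    pd u (Gd F g) p = Gd F (pd u g) p
      + ((∑ j, u.2.2 j * pd (ex j) g p) + ∑ j, pd u (Fc F j) p * pd (ev j) g p) := by
  unfold Gd
  rw [pd_vdZ hg.contDiffAt ((nsode_contDiff hF).differentiable (by norm_cast) p) u]
  congr 1
  rw [fderiv_expand g p (fderiv ℝ (nsode F) p u)]
  have h1 : (fderiv ℝ (nsode F) p u).1 = 0 := by
    rw [show ((fderiv ℝ (nsode F) p u).1) = Ct n (fderiv ℝ (nsode F) p u) from rfl,
      fderiv_comp_clm ((nsode_contDiff hF).differentiable (by norm_cast) p) (Ct n) u,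
      show (fun q => Ct n (nsode F q)) = fun _ => (1:ℝ) from rfl, fderiv_fun_const]
    rfl
  have h2 : ∀ j, (fderiv ℝ (nsode F) p u).2.1 j = u.2.2 j := by
    intro j
    rw [show ((fderiv ℝ (nsode F) p u).2.1 j) = Cx j (fderiv ℝ (nsode F) p u) from rfl,
      fderiv_comp_clm ((nsode_contDiff hF).differentiable (by norm_cast) p) (Cx j) u,
      show (fun q => Cx j (nsode F q)) = fun q : Evo n => q.2.2 j from rfl]
    exact pd_coord_v j u p
  have h3 : ∀ j, (fderiv ℝ (nsode F) p u).2.2 j = pd u (Fc F j) p := by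
    intro j
    rw [show ((fderiv ℝ (nsode F) p u).2.2 j) = Cv j (fderiv ℝ (nsode F) p u) from rfl,
      fderiv_comp_clm ((nsode_contDiff hF).differentiable (by norm_cast) p) (Cv j) u]
    rfl
  rw [h1]
  simp only [h2, h3]
  ring

/-- components of the derivative of the prolonged field -/
lemma fderiv_prolong_1 (hF : ContDiff ℝ (⊤ : ℕ∞) F) (hX0 : ContDiff ℝ (⊤ : ℕ∞) X0)
    (hXv : ContDiff ℝ (⊤ : ℕ∞) Xv) (p u : Evo n) :
    (fderiv ℝ (prolong F X0 Xv) p u).1 = pd u (X0c X0) p := by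
  rw [show ((fderiv ℝ (prolong F X0 Xv) p u).1) = Ct n (fderiv ℝ (prolong F X0 Xv) p u) from rfl,
    fderiv_comp_clm ((prolong_contDiff hF hX0 hXv).differentiable (by norm_cast) p) (Ct n) u]
  rfl

lemma fderiv_prolong_x (hF : ContDiff ℝ (⊤ : ℕ∞) F) (hX0 : ContDiff ℝ (⊤ : ℕ∞) X0)
    (hXv : ContDiff ℝ (⊤ : ℕ∞) Xv) (j : Fin n) (p u : Evo n) :
    (fderiv ℝ (prolong F X0 Xv) p u).2.1 j = pd u (Xic Xv j) p := by
  rw [show ((fderiv ℝ (prolong F X0 Xv) p u).2.1 j) = Cx j (fderiv ℝ (prolong F X0 Xv) p u)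
      from rfl,
    fderiv_comp_clm ((prolong_contDiff hF hX0 hXv).differentiable (by norm_cast) p) (Cx j) u]
  rfl

lemma fderiv_prolong_v (hF : ContDiff ℝ (⊤ : ℕ∞) F) (hX0 : ContDiff ℝ (⊤ : ℕ∞) X0)
    (hXv : ContDiff ℝ (⊤ : ℕ∞) Xv) (j : Fin n) (p u : Evo n) :
    (fderiv ℝ (prolong F X0 Xv) p u).2.2 j = pd u (Xbar F X0 Xv j) p := by
  rw [show ((fderiv ℝ (prolong F X0 Xv) p u).2.2 j) = Cv j (fderiv ℝ (prolong F X0 Xv) p u)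
      from rfl,
    fderiv_comp_clm ((prolong_contDiff hF hX0 hXv).differentiable (by norm_cast) p) (Cv j) u]
  rfl

/-- commutator of `pd u` with `Xd`. -/
lemma pd_Xd {g : Evo n → ℝ} (hg : ContDiff ℝ (⊤ : ℕ∞) g) (hF : ContDiff ℝ (⊤ : ℕ∞) F)
    (hX0 : ContDiff ℝ (⊤ : ℕ∞) X0) (hXv : ContDiff ℝ (⊤ : ℕ∞) Xv) (u : Evo n) (p : Evo n) :
    pd u (Xd F X0 Xv g) p = Xd F X0 Xv (pd u g) p
      + (pd u (X0c X0) p * pd (et n) g p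
        + ((∑ j, pd u (Xic Xv j) p * pd (ex j) g p)
          + ∑ j, pd u (Xbar F X0 Xv j) p * pd (ev j) g p)) := by
  unfold Xd
  rw [pd_vdZ hg.contDiffAt ((prolong_contDiff hF hX0 hXv).differentiable (by norm_cast) p) u]
  congr 1
  rw [fderiv_expand g p (fderiv ℝ (prolong F X0 Xv) p u),
    fderiv_prolong_1 hF hX0 hXv p u]
  simp only [fderiv_prolong_x hF hX0 hXv, fderiv_prolong_v hF hX0 hXv]

end Aux

namespace Aux
variable {n : ℕ} {L : Evo n → ℝ} {F : Evo n → Fin n → ℝ}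
  {X0 : ℝ × (Fin n → ℝ) → ℝ} {Xv : ℝ × (Fin n → ℝ) → Fin n → ℝ} {h : Evo n → ℝ}

/-- the normalizing factor is `-Γ(X⁰)` -/
lemma h_eq (hF : ContDiff ℝ (⊤ : ℕ∞) F) (hX0 : ContDiff ℝ (⊤ : ℕ∞) X0)
    (hXv : ContDiff ℝ (⊤ : ℕ∞) Xv)
    (hnorm : ∀ p, elieBracket (prolong F X0 Xv) (nsode F) p = h p • nsode F p) (p : Evo n) :
    h p = - Gd F (X0c X0) p := by
  have h1 := congrArg Prod.fst (hnorm p)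
  unfold elieBracket at h1
  rw [Prod.fst_sub, Prod.smul_fst] at h1
  have e1 : (fderiv ℝ (nsode F) p (prolong F X0 Xv p)).1 = 0 := by
    rw [show ((fderiv ℝ (nsode F) p (prolong F X0 Xv p)).1)
        = Ct n (fderiv ℝ (nsode F) p (prolong F X0 Xv p)) from rfl,
      fderiv_comp_clm ((nsode_contDiff hF).differentiable (by norm_cast) p) (Ct n) _,
      show (fun q => Ct n (nsode F q)) = fun _ => (1:ℝ) from rfl, fderiv_fun_const]
    rfl
  rw [e1, fderiv_prolong_1 hF hX0 hXv] at h1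
  have : (nsode F p).1 = 1 := rfl
  rw [this, smul_eq_mul, mul_one] at h1
  have e2 : Gd F (X0c X0) p = pd (nsode F p) (X0c X0) p := rfl
  rw [e2]
  linarith [h1]

/-- the v-component of the bracket condition -/
lemma bracket_v (hF : ContDiff ℝ (⊤ : ℕ∞) F) (hX0 : ContDiff ℝ (⊤ : ℕ∞) X0)
    (hXv : ContDiff ℝ (⊤ : ℕ∞) Xv)
    (hnorm : ∀ p, elieBracket (prolong F X0 Xv) (nsode F) p = h p • nsode F p)
    (i : Fin n) (p : Evo n) :
    Xd F X0 Xv (Fc F i) p - Gd F (Xbar F X0 Xv i) p = h p * F p i := by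
  have h1 := congrArg (fun w : Evo n => w.2.2 i) (hnorm p)
  unfold elieBracket at h1
  rw [Prod.snd_sub, Prod.snd_sub, Pi.sub_apply, Prod.smul_snd, Prod.smul_snd,
    Pi.smul_apply, smul_eq_mul] at h1
  have e1 : (fderiv ℝ (nsode F) p (prolong F X0 Xv p)).2.2 i = Xd F X0 Xv (Fc F i) p := by
    rw [show ((fderiv ℝ (nsode F) p (prolong F X0 Xv p)).2.2 i)
        = Cv i (fderiv ℝ (nsode F) p (prolong F X0 Xv p)) from rfl,
      fderiv_comp_clm ((nsode_contDiff hF).differentiable (by norm_cast) p) (Cv i) _]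
    rfl
  have e2 : (fderiv ℝ (prolong F X0 Xv) p (nsode F p)).2.2 i = Gd F (Xbar F X0 Xv i) p := by
    rw [fderiv_prolong_v hF hX0 hXv]
    rfl
  rw [e1, e2] at h1
  exact h1

/-- commutation of `Gd` and `Xd` modulo `h`·`Gd`, from the symmetry condition. -/
lemma Gd_Xd_comm {g : Evo n → ℝ} (hg : ∀ q, ContDiffAt ℝ (⊤ : ℕ∞) g q)
    (hF : ContDiff ℝ (⊤ : ℕ∞) F) (hX0 : ContDiff ℝ (⊤ : ℕ∞) X0)
    (hXv : ContDiff ℝ (⊤ : ℕ∞) Xv)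
    (hnorm : ∀ p, elieBracket (prolong F X0 Xv) (nsode F) p = h p • nsode F p) (p : Evo n) :
    Gd F (Xd F X0 Xv g) p = Xd F X0 Xv (Gd F g) p - h p * Gd F g p := by
  have hXp := (prolong_contDiff hF hX0 hXv).differentiable (by norm_cast) p
  have hGp := (nsode_contDiff hF).differentiable (by norm_cast) p
  have e1 : Gd F (Xd F X0 Xv g) p
      = fderiv ℝ (fderiv ℝ g) p (nsode F p) (prolong F X0 Xv p)
        + fderiv ℝ g p (fderiv ℝ (prolong F X0 Xv) p (nsode F p)) := by
    unfold Gd Xd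
    exact fderiv_fderiv_apply (hg p) hXp (nsode F p)
  have e2 : Xd F X0 Xv (Gd F g) p
      = fderiv ℝ (fderiv ℝ g) p (prolong F X0 Xv p) (nsode F p)
        + fderiv ℝ g p (fderiv ℝ (nsode F) p (prolong F X0 Xv p)) := by
    unfold Gd Xd
    exact fderiv_fderiv_apply (hg p) hGp (prolong F X0 Xv p)
  have sym := ((hg p).isSymmSndFDerivAt (by rw [minSmoothness_of_isRCLikeNormedField]; exact WithTop.coe_le_coe.2 le_top)).eq (nsode F p) (prolong F X0 Xv p)
  have hb := hnorm p
  unfold elieBracket at hb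
  have : fderiv ℝ (prolong F X0 Xv) p (nsode F p)
      = fderiv ℝ (nsode F) p (prolong F X0 Xv p) - h p • nsode F p := by
    rw [← hb]; abel
  rw [e1, e2, sym, this, map_sub, map_smul]
  have : Gd F g p = fderiv ℝ g p (nsode F p) := rfl
  rw [this]
  simp [smul_eq_mul]
  ring

end Aux

namespace Aux
variable {n : ℕ} {L : Evo n → ℝ} {F : Evo n → Fin n → ℝ}

lemma Wf_symm (hL : ContDiff ℝ (⊤ : ℕ∞) L) (i j : Fin n) : Wf L i j = Wf L j i := by
  funext p
  exact pd_pd_symm hL.contDiffAt (ev i) (ev j)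

lemma pd_Wf_swap (hL : ContDiff ℝ (⊤ : ℕ∞) L) (i j k : Fin n) (p : Evo n) :
    pd (ev k) (Wf L i j) p = pd (ev j) (Wf L i k) p := by
  have e1 : Wf L i j = pd (ev j) (Lv L i) := by
    funext q; exact pd_pd_symm hL.contDiffAt (ev i) (ev j)
  have e2 : Wf L i k = pd (ev k) (Lv L i) := by
    funext q; exact pd_pd_symm hL.contDiffAt (ev i) (ev k)
  rw [e1, e2]
  exact pd_pd_symm (pd_contDiff hL (ev i)).contDiffAt (ev k) (ev j)

lemma pd_ev_pd_Lv (hL : ContDiff ℝ (⊤ : ℕ∞) L) (w : Evo n) (i k : Fin n) (p : Evo n) :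
    pd (ev k) (pd w (Lv L i)) p = pd w (Wf L i k) p := by
  have e1 : pd (ev k) (Lv L i) = Wf L i k := by
    funext q; exact pd_pd_symm hL.contDiffAt (ev k) (ev i)
  rw [← e1]
  exact pd_pd_symm (pd_contDiff hL (ev i)).contDiffAt (ev k) w

/-- differentiated Euler–Lagrange equations -/
lemma EL_diff (hL : ContDiff ℝ (⊤ : ℕ∞) L) (hF : ContDiff ℝ (⊤ : ℕ∞) F)
    (hEL : ∀ p : Evo n, ∀ i,
      (∑ j, hessV L p i j * F p j) +
      (∑ j, fderiv ℝ (fun q : Evo n => fderiv ℝ L q (0, 0, Pi.single i 1)) p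
          (0, Pi.single j 1, 0) * p.2.2 j) +
      fderiv ℝ (fun q : Evo n => fderiv ℝ L q (0, 0, Pi.single i 1)) p (1, 0, 0)
        = fderiv ℝ L p (0, Pi.single i 1, 0))
    (i k : Fin n) (p : Evo n) :
    Gd F (Wf L i k) p + ∑ j, Wf L i j p * pd (ev k) (Fc F j) p
      = pd (ex i) (Lv L k) p - pd (ex k) (Lv L i) p := by
  -- the EL identity as an equality of functions
  have hfun : (fun p : Evo n => (∑ j, Wf L i j p * Fc F j p)
        + ((∑ j, pd (ex j) (Lv L i) p * p.2.2 j) + pd (et n) (Lv L i) p))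
      = fun p => pd (ex i) L p := by
    funext q
    have h0 := hEL q i
    have e1 : ∀ j, hessV L q i j = Wf L i j q := fun _ => rfl
    have e2 : ∀ j : Fin n, fderiv ℝ (fun r : Evo n => fderiv ℝ L r (0, 0, Pi.single i 1)) q
        (0, Pi.single j 1, 0) = pd (ex j) (Lv L i) q := fun _ => rfl
    have e3 : fderiv ℝ (fun r : Evo n => fderiv ℝ L r (0, 0, Pi.single i 1)) q (1, 0, 0)
        = pd (et n) (Lv L i) q := rfl
    have e4 : fderiv ℝ L q (0, Pi.single i 1, 0) = pd (ex i) L q := rfl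
    have e5 : ∀ j, F q j = Fc F j q := fun _ => rfl
    simp only [e1, e2, e3, e4, e5] at h0
    linarith [h0]
  -- differentiate it in direction `ev k`
  have hdiff := congrArg (fun gg => pd (ev k) gg p) hfun
  -- expand the left-hand side
  have dWf : ∀ a b : Fin n, DifferentiableAt ℝ (Wf L a b) p :=
    fun a b => ((Wf_contDiff hL a b).differentiable (by norm_cast)) p
  have dFc : ∀ a : Fin n, DifferentiableAt ℝ (Fc F a) p :=
    fun a => ((Fc_contDiff hF a).differentiable (by norm_cast)) p
  have dpexLv : ∀ a : Fin n, DifferentiableAt ℝ (pd (ex a) (Lv L i)) p :=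
    fun a => ((pd_contDiff (Lv_contDiff hL i) (ex a)).differentiable (by norm_cast)) p
  have dcoordv : ∀ a : Fin n, DifferentiableAt ℝ (fun q : Evo n => q.2.2 a) p :=
    fun a => (Cv a).differentiable.differentiableAt
  have dpetLv : DifferentiableAt ℝ (pd (et n) (Lv L i)) p :=
    ((pd_contDiff (Lv_contDiff hL i) (et n)).differentiable (by norm_cast)) p
  rw [pd_add (by exact DifferentiableAt.fun_sum fun j _ => (dWf i j).mul (dFc j))
      (by exact ((DifferentiableAt.fun_sum fun j _ => (dpexLv j).mul (dcoordv j))).add dpetLv),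
    pd_add (by exact DifferentiableAt.fun_sum fun j _ => (dpexLv j).mul (dcoordv j)) dpetLv,
    pd_sum Finset.univ (fun j _ => (dWf i j).fun_mul (dFc j)),
    pd_sum Finset.univ (fun j _ => (dpexLv j).fun_mul (dcoordv j))] at hdiff
  simp only [pd_mul (dWf i _) (dFc _), pd_mul (dpexLv _) (dcoordv _), pd_coord_v] at hdiff
  -- simplify the Kronecker delta sum
  have hdelta : (∑ j, (pd (ev k) (pd (ex j) (Lv L i)) p * p.2.2 j
        + pd (ex j) (Lv L i) p * (ev (n := n) k).2.2 j))
      = (∑ j, pd (ev k) (pd (ex j) (Lv L i)) p * p.2.2 j) + pd (ex k) (Lv L i) p := by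
    rw [Finset.sum_add_distrib]
    congr 1
    have : ∀ j, (ev (n := n) k).2.2 j = if j = k then (1:ℝ) else 0 := by
      intro j; simp [ev, Pi.single_apply]
    simp only [this, mul_ite, mul_one, mul_zero]
    simp
  rw [hdelta] at hdiff
  -- swap derivatives
  have sw1 : ∀ j, pd (ev k) (Wf L i j) p = pd (ev j) (Wf L i k) p :=
    fun j => pd_Wf_swap hL i j k p
  have sw2 : ∀ j, pd (ev k) (pd (ex j) (Lv L i)) p = pd (ex j) (Wf L i k) p := by
    intro j
    rw [pd_ev_pd_Lv hL (ex j) i k p]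
  have sw3 : pd (ev k) (pd (et n) (Lv L i)) p = pd (et n) (Wf L i k) p :=
    pd_ev_pd_Lv hL (et n) i k p
  have sw4 : pd (ev k) (pd (ex i) L) p = pd (ex i) (Lv L k) p := by
    have : pd (ev k) (pd (ex i) L) p = pd (ex i) (pd (ev k) L) p :=
      pd_pd_symm hL.contDiffAt (ev k) (ex i)
    rw [this]; rfl
  simp only [sw1, sw2, sw3, sw4] at hdiff
  -- expand `Gd`
  rw [Gd_expand (Wf L i k) p]
  have efc : ∀ j, Fc F j p = F p j := fun _ => rfl
  rw [Finset.sum_add_distrib] at hdiff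
  simp only [efc] at hdiff ⊢
  have c1 : (∑ j, p.2.2 j * pd (ex j) (Wf L i k) p)
      = ∑ j, pd (ex j) (Wf L i k) p * p.2.2 j :=
    Finset.sum_congr rfl fun j _ => by ring
  have c2 : (∑ j, F p j * pd (ev j) (Wf L i k) p)
      = ∑ j, pd (ev j) (Wf L i k) p * F p j :=
    Finset.sum_congr rfl fun j _ => by ring
  rw [c1, c2]
  linarith [hdiff]
end Aux

namespace Aux
variable {n : ℕ} {L : Evo n → ℝ} {F : Evo n → Fin n → ℝ}

lemma pd_prodWf (hL : ContDiff ℝ (⊤ : ℕ∞) L) (σ : Equiv.Perm (Fin n)) (p u : Evo n) :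
    pd u (fun q => ∏ i, Wf L (σ i) i q) p
      = ∑ i, (∏ j ∈ Finset.univ.erase i, Wf L (σ j) j p) * pd u (Wf L (σ i) i) p := by
  have hh : HasFDerivAt (fun x => ∏ i, Wf L (σ i) i x)
      (∑ i, (∏ j ∈ Finset.univ.erase i, Wf L (σ j) j p) • fderiv ℝ (Wf L (σ i) i) p) p :=
    HasFDerivAt.finset_prod
      (fun i _ => ((Wf_contDiff hL _ _).differentiable (by norm_cast) p).hasFDerivAt)
  unfold pd
  rw [hh.fderiv]
  simp [ContinuousLinearMap.sum_apply, smul_eq_mul]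

lemma det_entry_deriv (hL : ContDiff ℝ (⊤ : ℕ∞) L) (p u : Evo n) :
    fderiv ℝ (fun q => (hessV L q).det) p u
      = ∑ σ : Equiv.Perm (Fin n), (Equiv.Perm.sign σ : ℝ)
          * ∑ i, (∏ j ∈ Finset.univ.erase i, Wf L (σ j) j p) * pd u (Wf L (σ i) i) p := by
  have detc : (fun p : Evo n => (hessV L p).det)
      = fun p => ∑ σ : Equiv.Perm (Fin n), (Equiv.Perm.sign σ : ℝ) * ∏ i, Wf L (σ i) i p := by
    funext q
    rw [Matrix.det_apply']
    simp [Wf_eq_hessV]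
  rw [detc]
  have dterm : ∀ σ : Equiv.Perm (Fin n),
      DifferentiableAt ℝ (fun q => (Equiv.Perm.sign σ : ℝ) * ∏ i, Wf L (σ i) i q) p :=
    fun σ => (differentiableAt_const _).mul
      (((contDiff_prod fun i _ => Wf_contDiff hL (σ i) i).differentiable (by norm_cast)) p)
  have e := pd_sum (f := fun (σ : Equiv.Perm (Fin n)) q =>
      (Equiv.Perm.sign σ : ℝ) * ∏ i, Wf L (σ i) i q) Finset.univ (fun σ _ => dterm σ) u (p := p)
  unfold pd at e
  rw [e]
  refine Finset.sum_congr rfl fun σ _ => ?_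
  have := pd_const_mul (f := fun q => ∏ i, Wf L (σ i) i q) (p := p)
    (((contDiff_prod fun i _ => Wf_contDiff hL (σ i) i).differentiable (by norm_cast)) p)
    (Equiv.Perm.sign σ : ℝ) u
  unfold pd at this
  rw [this]
  congr 1
  exact pd_prodWf hL σ p u

lemma jacobi_alg (A H : Matrix (Fin n) (Fin n) ℝ) :
    (∑ σ : Equiv.Perm (Fin n), (Equiv.Perm.sign σ : ℝ)
        * ∑ i, (∏ j ∈ Finset.univ.erase i, A (σ j) j) * H (σ i) i)
      = ∑ i, ∑ j, A.adjugate i j * H j i := by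
  have e1 : ∀ i : Fin n, (A.updateCol i (fun r => H r i)).det
      = ∑ σ : Equiv.Perm (Fin n), (Equiv.Perm.sign σ : ℝ)
          * (H (σ i) i * ∏ j ∈ Finset.univ.erase i, A (σ j) j) := by
    intro i
    rw [Matrix.det_apply']
    refine Finset.sum_congr rfl fun σ _ => ?_
    congr 1
    rw [← Finset.mul_prod_erase Finset.univ _ (Finset.mem_univ i)]
    congr 1
    · rw [Matrix.updateCol_apply]; simp
    · refine Finset.prod_congr rfl fun j hj => ?_
      rw [Matrix.updateCol_apply, if_neg (Finset.ne_of_mem_erase hj)]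
  have e2 : ∀ i : Fin n, (∑ j, A.adjugate i j * H j i)
      = (A.updateCol i (fun r => H r i)).det := by
    intro i
    have := Matrix.cramer_eq_adjugate_mulVec A (fun r => H r i)
    have h2 := congrFun this i
    rw [Matrix.cramer_apply] at h2
    rw [h2]
    simp [Matrix.mulVec, dotProduct]
  calc (∑ σ : Equiv.Perm (Fin n), (Equiv.Perm.sign σ : ℝ)
        * ∑ i, (∏ j ∈ Finset.univ.erase i, A (σ j) j) * H (σ i) i)
      = ∑ σ : Equiv.Perm (Fin n), ∑ i, (Equiv.Perm.sign σ : ℝ)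
          * (H (σ i) i * ∏ j ∈ Finset.univ.erase i, A (σ j) j) := by
        refine Finset.sum_congr rfl fun σ _ => ?_
        rw [Finset.mul_sum]
        exact Finset.sum_congr rfl fun i _ => by ring
    _ = ∑ i, ∑ σ : Equiv.Perm (Fin n), (Equiv.Perm.sign σ : ℝ)
          * (H (σ i) i * ∏ j ∈ Finset.univ.erase i, A (σ j) j) := Finset.sum_comm
    _ = ∑ i, ∑ j, A.adjugate i j * H j i := by
        refine Finset.sum_congr rfl fun i _ => ?_
        rw [e2 i, e1 i]

end Aux

namespace Aux
variable {n : ℕ} {L : Evo n → ℝ} {F : Evo n → Fin n → ℝ}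

open Matrix in
lemma fderiv_detW (hL : ContDiff ℝ (⊤ : ℕ∞) L) (p u : Evo n) :
    fderiv ℝ (fun q => (hessV L q).det) p u
      = ∑ i, ∑ j, (hessV L p).adjugate i j * pd u (Wf L j i) p :=
  (det_entry_deriv hL p u).trans
    (by exact jacobi_alg (hessV L p) (Matrix.of fun a b => pd u (Wf L a b) p))

lemma fderiv_ldet (hL : ContDiff ℝ (⊤ : ℕ∞) L) (hdetpos : ∀ p : Evo n, 0 < (hessV L p).det)
    (p u : Evo n) :
    fderiv ℝ (fun q => Real.log (hessV L q).det) p u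
      = ∑ i, ∑ j, (hessV L p)⁻¹ i j * pd u (Wf L j i) p := by
  have hdiff : HasFDerivAt (fun q : Evo n => (hessV L q).det)
      (fderiv ℝ (fun q : Evo n => (hessV L q).det) p) p :=
    (((detW_contDiff hL).differentiable (by norm_cast)) p).hasFDerivAt
  have hlog := (Real.hasDerivAt_log (ne_of_gt (hdetpos p))).comp_hasFDerivAt p hdiff
  have ecomp : (fun q : Evo n => Real.log (hessV L q).det)
      = Real.log ∘ fun q : Evo n => (hessV L q).det := rfl
  rw [ecomp, hlog.fderiv]
  simp only [ContinuousLinearMap.smul_apply, smul_eq_mul]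
  rw [fderiv_detW hL p u, Finset.mul_sum]
  refine Finset.sum_congr rfl fun i _ => ?_
  rw [Finset.mul_sum]
  refine Finset.sum_congr rfl fun j _ => ?_
  rw [Matrix.inv_def]
  simp only [Matrix.smul_apply, smul_eq_mul, Ring.inverse_eq_inv']
  ring

open Matrix in
lemma W_symm (hL : ContDiff ℝ (⊤ : ℕ∞) L) (p : Evo n) : (hessV L p)ᵀ = hessV L p := by
  ext a b
  rw [Matrix.transpose_apply]
  have e1 : hessV L p b a = Wf L b a p := rfl
  have e2 : hessV L p a b = Wf L a b p := rfl
  rw [e1, e2, Wf_symm hL a b]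

open Matrix in
lemma Winv_symm (hL : ContDiff ℝ (⊤ : ℕ∞) L) (p : Evo n) (i j : Fin n) :
    (hessV L p)⁻¹ i j = (hessV L p)⁻¹ j i := by
  have : ((hessV L p)⁻¹)ᵀ = (hessV L p)⁻¹ := by
    rw [Matrix.transpose_nonsing_inv, W_symm hL]
  conv_lhs => rw [← this]
  rw [Matrix.transpose_apply]

/-- det W is a Jacobi last multiplier: Γ(log det W) = − div Γ. -/
lemma multiplier (hL : ContDiff ℝ (⊤ : ℕ∞) L) (hF : ContDiff ℝ (⊤ : ℕ∞) F)
    (hdetpos : ∀ p : Evo n, 0 < (hessV L p).det)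
    (hEL : ∀ p : Evo n, ∀ i,
      (∑ j, hessV L p i j * F p j) +
      (∑ j, fderiv ℝ (fun q : Evo n => fderiv ℝ L q (0, 0, Pi.single i 1)) p
          (0, Pi.single j 1, 0) * p.2.2 j) +
      fderiv ℝ (fun q : Evo n => fderiv ℝ L q (0, 0, Pi.single i 1)) p (1, 0, 0)
        = fderiv ℝ L p (0, Pi.single i 1, 0))
    (p : Evo n) :
    Gd F (fun q => Real.log (hessV L q).det) p = - divG F p := by
  have e0 : Gd F (fun q => Real.log (hessV L q).det) p
      = ∑ i, ∑ j, (hessV L p)⁻¹ i j * Gd F (Wf L j i) p := by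
    exact fderiv_ldet hL hdetpos p (nsode F p)
  rw [e0]
  have eEL : ∀ a b : Fin n, Gd F (Wf L a b) p
      = (pd (ex a) (Lv L b) p - pd (ex b) (Lv L a) p)
        - ∑ c, Wf L a c p * pd (ev b) (Fc F c) p := by
    intro a b
    linarith [EL_diff hL hF hEL a b p]
  simp only [eEL]
  have split : (∑ i, ∑ j, (hessV L p)⁻¹ i j
      * ((pd (ex j) (Lv L i) p - pd (ex i) (Lv L j) p)
        - ∑ c, Wf L j c p * pd (ev i) (Fc F c) p))
      = (∑ i, ∑ j, (hessV L p)⁻¹ i j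
          * (pd (ex j) (Lv L i) p - pd (ex i) (Lv L j) p))
        - ∑ i, ∑ j, (hessV L p)⁻¹ i j * ∑ c, Wf L j c p * pd (ev i) (Fc F c) p := by
    rw [← Finset.sum_sub_distrib]
    refine Finset.sum_congr rfl fun i _ => ?_
    rw [← Finset.sum_sub_distrib]
    exact Finset.sum_congr rfl fun j _ => by ring
  rw [split]
  -- the antisymmetric part vanishes
  have hT : (∑ i, ∑ j, (hessV L p)⁻¹ i j
      * (pd (ex j) (Lv L i) p - pd (ex i) (Lv L j) p)) = 0 := by
    set T := ∑ i, ∑ j, (hessV L p)⁻¹ i j * (pd (ex j) (Lv L i) p - pd (ex i) (Lv L j) p) with hTdef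
    have : T = -T := by
      calc T = ∑ j, ∑ i, (hessV L p)⁻¹ i j * (pd (ex j) (Lv L i) p - pd (ex i) (Lv L j) p) :=
            Finset.sum_comm
        _ = ∑ j, ∑ i, -((hessV L p)⁻¹ j i * (pd (ex i) (Lv L j) p - pd (ex j) (Lv L i) p)) := by
            refine Finset.sum_congr rfl fun j _ => Finset.sum_congr rfl fun i _ => ?_
            rw [Winv_symm hL p i j]
            ring
        _ = -T := by
            rw [hTdef]
            rw [← Finset.sum_neg_distrib]
            refine Finset.sum_congr rfl fun j _ => ?_
            rw [← Finset.sum_neg_distrib]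
    linarith [this]
  rw [hT]
  -- the remaining part is div Γ
  have hS : (∑ i, ∑ j, (hessV L p)⁻¹ i j * ∑ c, Wf L j c p * pd (ev i) (Fc F c) p)
      = divG F p := by
    have hu : IsUnit (hessV L p).det := isUnit_iff_ne_zero.2 (ne_of_gt (hdetpos p))
    have inner : ∀ i : Fin n,
        (∑ j, (hessV L p)⁻¹ i j * ∑ c, Wf L j c p * pd (ev i) (Fc F c) p)
          = pd (ev i) (Fc F i) p := by
      intro i
      have e1 : ∀ j : Fin n, (hessV L p)⁻¹ i j * ∑ c, Wf L j c p * pd (ev i) (Fc F c) p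
          = ∑ c, ((hessV L p)⁻¹ i j * hessV L p j c) * pd (ev i) (Fc F c) p := by
        intro j
        rw [Finset.mul_sum]
        refine Finset.sum_congr rfl fun c _ => ?_
        have : Wf L j c p = hessV L p j c := rfl
        rw [this]; ring
      simp only [e1]
      rw [Finset.sum_comm]
      have e2 : ∀ c : Fin n,
          (∑ j, ((hessV L p)⁻¹ i j * hessV L p j c) * pd (ev i) (Fc F c) p)
            = (if i = c then (1:ℝ) else 0) * pd (ev i) (Fc F c) p := by
        intro c
        rw [← Finset.sum_mul]
        congr 1
        rw [← Matrix.mul_apply, Matrix.nonsing_inv_mul _ hu, Matrix.one_apply]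
      simp only [e2]
      simp
    rw [Finset.sum_congr rfl fun i _ => inner i]
    rfl
  rw [hS]
  ring

end Aux

namespace Aux
variable {n : ℕ} {L : Evo n → ℝ} {F : Evo n → Fin n → ℝ}
  {X0 : ℝ × (Fin n → ℝ) → ℝ} {Xv : ℝ × (Fin n → ℝ) → Fin n → ℝ} {h : Evo n → ℝ}

lemma sum_delta (k : Fin n) (f : Fin n → ℝ) :
    (∑ j, (ev (n := n) k).2.2 j * f j) = f k := by
  have : ∀ j, (ev (n := n) k).2.2 j = if j = k then (1:ℝ) else 0 := by
    intro j; simp [ev, Pi.single_apply]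
  simp only [this, ite_mul, one_mul, zero_mul]
  simp

lemma evii (i : Fin n) : (ev (n := n) i).2.2 i = 1 := by simp [ev]

/-- `∂/∂vᵏ` of a base function vanishes identically -/
lemma pd_ev_base_fun {ψ : ℝ × (Fin n → ℝ) → ℝ} (hψ : ContDiff ℝ (⊤ : ℕ∞) ψ) (k : Fin n) :
    pd (ev k) (fun q : Evo n => ψ (q.1, q.2.1)) = fun _ => 0 := by
  funext q
  exact pd_ev_base ((hψ.differentiable (by norm_cast)).differentiableAt) k

section Key
variable (hL : ContDiff ℝ (⊤ : ℕ∞) L) (hF : ContDiff ℝ (⊤ : ℕ∞) F)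
  (hX0 : ContDiff ℝ (⊤ : ℕ∞) X0) (hXv : ContDiff ℝ (⊤ : ℕ∞) Xv)

include hF hX0 hXv

/-- `∂/∂vᵏ X̄ⁱ` -/
lemma pd_ev_Xbar (k i : Fin n) (p : Evo n) :
    pd (ev k) (Xbar F X0 Xv i) p
      = pd (ex k) (Xic Xv i) p
        - ((ev (n := n) k).2.2 i * Gd F (X0c X0) p + p.2.2 i * pd (ex k) (X0c X0) p) := by
  have dG1 : DifferentiableAt ℝ (Gd F (Xic Xv i)) p :=
    ((Gd_contDiff hF (Xic_contDiff hXv i)).differentiable (by norm_cast)) p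
  have dG0 : DifferentiableAt ℝ (Gd F (X0c X0)) p :=
    ((Gd_contDiff hF (X0c_contDiff hX0)).differentiable (by norm_cast)) p
  have dcoord : DifferentiableAt ℝ (fun q : Evo n => q.2.2 i) p :=
    (Cv i).differentiable.differentiableAt
  unfold Xbar
  rw [pd_sub dG1 (dcoord.fun_mul dG0), pd_mul dcoord dG0, pd_coord_v]
  have e1 : pd (ev k) (Gd F (Xic Xv i)) p = pd (ex k) (Xic Xv i) p := by
    rw [pd_Gd (Xic_contDiff hXv i) hF (ev k) p]
    have z : pd (ev k) (Xic Xv i) = fun _ : Evo n => (0:ℝ) :=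
      pd_ev_base_fun ((contDiff_apply ℝ ℝ i).comp hXv) k
    have zz : ∀ j, pd (ev j) (Xic Xv i) p = 0 := by
      intro j
      have := pd_ev_base_fun (n := n) ((contDiff_apply ℝ ℝ i).comp hXv) j
      exact congrFun this p
    have egd : Gd F (pd (ev k) (Xic Xv i)) p = 0 := by
      rw [z]
      unfold Gd
      rw [fderiv_fun_const]
      rfl
    rw [egd, sum_delta]
    simp [zz]
  have e2 : pd (ev k) (Gd F (X0c X0)) p = pd (ex k) (X0c X0) p := by
    rw [pd_Gd (X0c_contDiff hX0) hF (ev k) p]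
    have z : pd (ev k) (X0c X0) = fun _ : Evo n => (0:ℝ) := pd_ev_base_fun hX0 k
    have zz : ∀ j, pd (ev j) (X0c X0) p = 0 := by
      intro j
      exact congrFun (pd_ev_base_fun (n := n) hX0 j) p
    have egd : Gd F (pd (ev k) (X0c X0)) p = 0 := by
      rw [z]
      unfold Gd
      rw [fderiv_fun_const]
      rfl
    rw [egd, sum_delta]
    simp [zz]
  rw [e1, e2]

/-- `∂/∂xᵏ X̄ⁱ` -/
lemma pd_ex_Xbar (k i : Fin n) (p : Evo n) :
    pd (ex k) (Xbar F X0 Xv i) p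
      = Gd F (pd (ex k) (Xic Xv i)) p - p.2.2 i * Gd F (pd (ex k) (X0c X0)) p := by
  have dG1 : DifferentiableAt ℝ (Gd F (Xic Xv i)) p :=
    ((Gd_contDiff hF (Xic_contDiff hXv i)).differentiable (by norm_cast)) p
  have dG0 : DifferentiableAt ℝ (Gd F (X0c X0)) p :=
    ((Gd_contDiff hF (X0c_contDiff hX0)).differentiable (by norm_cast)) p
  have dcoord : DifferentiableAt ℝ (fun q : Evo n => q.2.2 i) p :=
    (Cv i).differentiable.differentiableAt
  unfold Xbar
  rw [pd_sub dG1 (dcoord.fun_mul dG0), pd_mul dcoord dG0, pd_coord_v]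
  have ex22 : (ex (n := n) k).2.2 = 0 := rfl
  have zz0 : ∀ j, pd (ev j) (X0c X0) p = 0 := fun j => congrFun (pd_ev_base_fun (n := n) hX0 j) p
  have zzi : ∀ j, pd (ev j) (Xic Xv i) p = 0 :=
    fun j => congrFun (pd_ev_base_fun (n := n) ((contDiff_apply ℝ ℝ i).comp hXv) j) p
  have e1 : pd (ex k) (Gd F (Xic Xv i)) p = Gd F (pd (ex k) (Xic Xv i)) p := by
    rw [pd_Gd (Xic_contDiff hXv i) hF (ex k) p, ex22]
    simp [zzi]
  have e2 : pd (ex k) (Gd F (X0c X0)) p = Gd F (pd (ex k) (X0c X0)) p := by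
    rw [pd_Gd (X0c_contDiff hX0) hF (ex k) p, ex22]
    simp [zz0]
  rw [e1, e2, ex22]
  simp

end Key
end Aux

namespace Aux
variable {n : ℕ} {L : Evo n → ℝ} {F : Evo n → Fin n → ℝ}
  {X0 : ℝ × (Fin n → ℝ) → ℝ} {Xv : ℝ × (Fin n → ℝ) → Fin n → ℝ} {h : Evo n → ℝ}

noncomputable def Sfun (X0 : ℝ × (Fin n → ℝ) → ℝ) (Xv : ℝ × (Fin n → ℝ) → Fin n → ℝ) :
    Evo n → ℝ :=
  fun q => ∑ i, (pd (ex i) (Xic Xv i) q - q.2.2 i * pd (ex i) (X0c X0) q)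

section Key2
variable (hF : ContDiff ℝ (⊤ : ℕ∞) F)
  (hX0 : ContDiff ℝ (⊤ : ℕ∞) X0) (hXv : ContDiff ℝ (⊤ : ℕ∞) Xv) (hh : ContDiff ℝ (⊤ : ℕ∞) h)

include hX0 hXv in
lemma Sfun_contDiff : ContDiff ℝ (⊤ : ℕ∞) (Sfun (n := n) X0 Xv) :=
  ContDiff.sum fun i _ => (pd_contDiff (Xic_contDiff hXv i) _).sub
    (((Cv i).contDiff).mul (pd_contDiff (X0c_contDiff hX0) _))

include hF hX0 hXv in
lemma Gd_Sfun (p : Evo n) :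
    Gd F (Sfun X0 Xv) p
      = ∑ i, (Gd F (pd (ex i) (Xic Xv i)) p
          - (F p i * pd (ex i) (X0c X0) p + p.2.2 i * Gd F (pd (ex i) (X0c X0)) p)) := by
  have egd : ∀ g : Evo n → ℝ, pd (nsode F p) g p = Gd F g p := fun _ => rfl
  have d1 : ∀ i : Fin n, DifferentiableAt ℝ (pd (ex i) (Xic Xv i)) p :=
    fun i => ((pd_contDiff (Xic_contDiff hXv i) _).differentiable (by norm_cast)) p
  have d0 : ∀ i : Fin n, DifferentiableAt ℝ (pd (ex i) (X0c X0)) p :=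
    fun i => ((pd_contDiff (X0c_contDiff hX0) _).differentiable (by norm_cast)) p
  have dcoord : ∀ i : Fin n, DifferentiableAt ℝ (fun q : Evo n => q.2.2 i) p :=
    fun i => (Cv i).differentiable.differentiableAt
  have e0 : Gd F (Sfun X0 Xv) p = pd (nsode F p) (Sfun X0 Xv) p := rfl
  rw [e0]
  unfold Sfun
  rw [pd_sum Finset.univ (fun i _ => (d1 i).fun_sub ((dcoord i).fun_mul (d0 i)))]
  refine Finset.sum_congr rfl fun i _ => ?_
  rw [pd_sub (d1 i) ((dcoord i).fun_mul (d0 i)), pd_mul (dcoord i) (d0 i), pd_coord_v]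
  rw [egd, egd]
  rfl

include hF hX0 hXv in
lemma sum_pd_ex_Xbar (p : Evo n) :
    (∑ i, pd (ex i) (Xbar F X0 Xv i) p)
      = Gd F (Sfun X0 Xv) p + ∑ i, F p i * pd (ex i) (X0c X0) p := by
  rw [Gd_Sfun hF hX0 hXv p, ← Finset.sum_add_distrib]
  refine Finset.sum_congr rfl fun i _ => ?_
  rw [pd_ex_Xbar hF hX0 hXv i i p]
  ring

include hF hX0 hXv in
lemma sum_pd_ev_Xbar :
    (fun q => ∑ i, pd (ev i) (Xbar F X0 Xv i) q)
      = fun q => Sfun X0 Xv q - (n : ℝ) * Gd F (X0c X0) q := by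
  funext q
  have e1 : ∀ i : Fin n, pd (ev i) (Xbar F X0 Xv i) q
      = (pd (ex i) (Xic Xv i) q - q.2.2 i * pd (ex i) (X0c X0) q) - Gd F (X0c X0) q := by
    intro i
    rw [pd_ev_Xbar hF hX0 hXv i i q, evii]
    ring
  rw [Finset.sum_congr rfl fun i _ => e1 i, Finset.sum_sub_distrib]
  unfold Sfun
  rw [Finset.sum_const, Finset.card_univ, Fintype.card_fin, nsmul_eq_mul]

end Key2
end Aux

namespace Aux
variable {n : ℕ} {L : Evo n → ℝ} {F : Evo n → Fin n → ℝ}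
  {X0 : ℝ × (Fin n → ℝ) → ℝ} {Xv : ℝ × (Fin n → ℝ) → Fin n → ℝ} {h : Evo n → ℝ}

section KeyB
variable (hF : ContDiff ℝ (⊤ : ℕ∞) F)
  (hX0 : ContDiff ℝ (⊤ : ℕ∞) X0) (hXv : ContDiff ℝ (⊤ : ℕ∞) Xv) (hh : ContDiff ℝ (⊤ : ℕ∞) h)
  (hnorm : ∀ p, elieBracket (prolong F X0 Xv) (nsode F) p = h p • nsode F p)

include hF hX0 hXv hnorm in
lemma pd_ev_h (i : Fin n) (p : Evo n) : pd (ev i) h p = - pd (ex i) (X0c X0) p := by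
  have hfun : h = fun q => -Gd F (X0c X0) q :=
    funext fun q => by rw [h_eq hF hX0 hXv hnorm q]
  rw [hfun, pd_neg]
  congr 1
  rw [pd_Gd (X0c_contDiff hX0) hF (ev i) p]
  have z : pd (ev i) (X0c X0) = fun _ : Evo n => (0:ℝ) := pd_ev_base_fun hX0 i
  have zz : ∀ j, pd (ev j) (X0c X0) p = 0 := fun j => congrFun (pd_ev_base_fun (n := n) hX0 j) p
  have egd : Gd F (pd (ev i) (X0c X0)) p = 0 := by
    rw [z]; unfold Gd; rw [fderiv_fun_const]; rfl
  rw [egd, sum_delta]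
  simp [zz]

include hF hX0 hXv hh hnorm in
/-- THE key identity: `2 Γ(S) − n Γ(Γ(X⁰)) = X(div Γ) − h · div Γ`. -/
lemma keyB (p : Evo n) :
    2 * Gd F (Sfun X0 Xv) p - (n : ℝ) * Gd F (Gd F (X0c X0)) p
      = Xd F X0 Xv (divG F) p - h p * divG F p := by
  have hXb : ∀ i, ContDiff ℝ (⊤ : ℕ∞) (Xbar F X0 Xv i) := Xbar_contDiff hF hX0 hXv
  have hFc : ∀ i : Fin n, ContDiff ℝ (⊤ : ℕ∞) (Fc F i) := Fc_contDiff hF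
  -- the bracket condition as a function identity, componentwise
  have eqfun : ∀ i, Gd F (Xbar F X0 Xv i) = fun q => Xd F X0 Xv (Fc F i) q - h q * Fc F i q := by
    intro i
    funext q
    have := bracket_v hF hX0 hXv hnorm i q
    have efc : F q i = Fc F i q := rfl
    rw [efc] at this
    linarith [this]
  -- differentiate component i in direction ev i
  have eqi : ∀ i,
      Gd F (pd (ev i) (Xbar F X0 Xv i)) p + pd (ex i) (Xbar F X0 Xv i) p
        + (∑ j, pd (ev i) (Fc F j) p * pd (ev j) (Xbar F X0 Xv i) p)
      = Xd F X0 Xv (pd (ev i) (Fc F i)) p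
        + (∑ j, pd (ev i) (Xbar F X0 Xv j) p * pd (ev j) (Fc F i) p)
        + pd (ex i) (X0c X0) p * Fc F i p - h p * pd (ev i) (Fc F i) p := by
    intro i
    have hd := congrArg (fun g => pd (ev i) g p) (eqfun i)
    rw [pd_Gd (hXb i) hF (ev i) p] at hd
    rw [pd_sub (((Xd_contDiff hF hX0 hXv (hFc i)).differentiable (by norm_cast)) p)
        (((hh.mul (hFc i)).differentiable (by norm_cast)) p : DifferentiableAt ℝ (fun q => h q * Fc F i q) p)] at hd
    rw [pd_Xd (hFc i) hF hX0 hXv (ev i) p] at hd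
    rw [pd_mul ((hh.differentiable (by norm_cast)) p)
        (((hFc i).differentiable (by norm_cast)) p)] at hd
    rw [pd_ev_h hF hX0 hXv hnorm i p] at hd
    have z0 : pd (ev i) (X0c X0) p = 0 := congrFun (pd_ev_base_fun (n := n) hX0 i) p
    have zi : ∀ j, pd (ev i) (Xic Xv j) p = 0 :=
      fun j => congrFun (pd_ev_base_fun (n := n) ((contDiff_apply ℝ ℝ j).comp hXv) i) p
    rw [z0] at hd
    simp only [zi, zero_mul, mul_zero, Finset.sum_const_zero, add_zero, zero_add] at hd
    rw [sum_delta] at hd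
    linarith [hd]
  -- sum the identities over i
  have hsum :
      (∑ i, (Gd F (pd (ev i) (Xbar F X0 Xv i)) p + pd (ex i) (Xbar F X0 Xv i) p
        + (∑ j, pd (ev i) (Fc F j) p * pd (ev j) (Xbar F X0 Xv i) p)))
      = ∑ i, (Xd F X0 Xv (pd (ev i) (Fc F i)) p
        + (∑ j, pd (ev i) (Xbar F X0 Xv j) p * pd (ev j) (Fc F i) p)
        + pd (ex i) (X0c X0) p * Fc F i p - h p * pd (ev i) (Fc F i) p) :=
    Finset.sum_congr rfl fun i _ => eqi i
  -- first LHS term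
  have t1 : (∑ i, Gd F (pd (ev i) (Xbar F X0 Xv i)) p)
      = Gd F (Sfun X0 Xv) p - (n : ℝ) * Gd F (Gd F (X0c X0)) p := by
    have e1 : (∑ i, Gd F (pd (ev i) (Xbar F X0 Xv i)) p)
        = Gd F (fun q => ∑ i, pd (ev i) (Xbar F X0 Xv i) q) p := by
      have egd : ∀ g : Evo n → ℝ, pd (nsode F p) g p = Gd F g p := fun _ => rfl
      rw [show Gd F (fun q => ∑ i, pd (ev i) (Xbar F X0 Xv i) q) p
          = pd (nsode F p) (fun q => ∑ i, pd (ev i) (Xbar F X0 Xv i) q) p from rfl,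
        pd_sum Finset.univ (fun i _ =>
          ((pd_contDiff (hXb i) (ev i)).differentiable (by norm_cast)) p)]
      simp only [egd]
    rw [e1, sum_pd_ev_Xbar hF hX0 hXv]
    have dS : DifferentiableAt ℝ (Sfun (n := n) X0 Xv) p :=
      ((Sfun_contDiff hX0 hXv).differentiable (by norm_cast)) p
    have dG0 : DifferentiableAt ℝ (Gd F (X0c X0)) p :=
      ((Gd_contDiff hF (X0c_contDiff hX0)).differentiable (by norm_cast)) p
    have egd : ∀ g : Evo n → ℝ, pd (nsode F p) g p = Gd F g p := fun _ => rfl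
    rw [show Gd F (fun q => Sfun X0 Xv q - (n : ℝ) * Gd F (X0c X0) q) p
        = pd (nsode F p) (fun q => Sfun X0 Xv q - (n : ℝ) * Gd F (X0c X0) q) p from rfl,
      pd_sub dS ((differentiableAt_const _).fun_mul dG0),
      pd_mul (differentiableAt_const _) dG0, pd_const]
    rw [egd, egd]
    ring
  -- second LHS term
  have t2 : (∑ i, pd (ex i) (Xbar F X0 Xv i) p)
      = Gd F (Sfun X0 Xv) p + ∑ i, F p i * pd (ex i) (X0c X0) p :=
    sum_pd_ex_Xbar hF hX0 hXv p
  -- double sums agree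
  have t3 : (∑ i, ∑ j, pd (ev i) (Fc F j) p * pd (ev j) (Xbar F X0 Xv i) p)
      = ∑ i, ∑ j, pd (ev i) (Xbar F X0 Xv j) p * pd (ev j) (Fc F i) p := by
    rw [Finset.sum_comm]
    exact Finset.sum_congr rfl fun i _ => Finset.sum_congr rfl fun j _ => by ring
  -- Xd of div Γ
  have t4 : (∑ i, Xd F X0 Xv (pd (ev i) (Fc F i)) p) = Xd F X0 Xv (divG F) p := by
    have exd : ∀ g : Evo n → ℝ, pd (prolong F X0 Xv p) g p = Xd F X0 Xv g p := fun _ => rfl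
    rw [show Xd F X0 Xv (divG F) p = pd (prolong F X0 Xv p) (divG F) p from rfl]
    unfold divG
    rw [pd_sum Finset.univ (fun i _ =>
      ((pd_contDiff (hFc i) (ev i)).differentiable (by norm_cast)) p)]
    simp only [exd]
  -- h · div Γ
  have t5 : (∑ i, h p * pd (ev i) (Fc F i) p) = h p * divG F p := by
    unfold divG
    rw [Finset.mul_sum]
  -- assemble
  rw [Finset.sum_add_distrib, Finset.sum_add_distrib, t1, t2, t3] at hsum
  have esplit : (∑ i, (Xd F X0 Xv (pd (ev i) (Fc F i)) p
        + (∑ j, pd (ev i) (Xbar F X0 Xv j) p * pd (ev j) (Fc F i) p)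
        + pd (ex i) (X0c X0) p * Fc F i p - h p * pd (ev i) (Fc F i) p))
      = (∑ i, Xd F X0 Xv (pd (ev i) (Fc F i)) p)
        + (∑ i, ∑ j, pd (ev i) (Xbar F X0 Xv j) p * pd (ev j) (Fc F i) p)
        + (∑ i, pd (ex i) (X0c X0) p * Fc F i p)
        - ∑ i, h p * pd (ev i) (Fc F i) p := by
    rw [Finset.sum_sub_distrib, Finset.sum_add_distrib, Finset.sum_add_distrib]
  rw [esplit, t4, t5] at hsum
  have t6 : (∑ i, pd (ex i) (X0c X0) p * Fc F i p)
      = ∑ i, F p i * pd (ex i) (X0c X0) p := by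
    refine Finset.sum_congr rfl fun i _ => ?_
    have : Fc F i p = F p i := rfl
    rw [this]; ring
  rw [t6] at hsum
  linarith [hsum]

end KeyB
end Aux

namespace Aux
variable {n : ℕ} {L : Evo n → ℝ} {F : Evo n → Fin n → ℝ}
  {X0 : ℝ × (Fin n → ℝ) → ℝ} {Xv : ℝ × (Fin n → ℝ) → Fin n → ℝ} {h : Evo n → ℝ}

lemma keyJ (hL : ContDiff ℝ (⊤ : ℕ∞) L) (hF : ContDiff ℝ (⊤ : ℕ∞) F)
    (hX0 : ContDiff ℝ (⊤ : ℕ∞) X0) (hXv : ContDiff ℝ (⊤ : ℕ∞) Xv)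
    (hnorm : ∀ p, elieBracket (prolong F X0 Xv) (nsode F) p = h p • nsode F p)
    (hdetpos : ∀ p : Evo n, 0 < (hessV L p).det)
    (hEL : ∀ p : Evo n, ∀ i,
      (∑ j, hessV L p i j * F p j) +
      (∑ j, fderiv ℝ (fun q : Evo n => fderiv ℝ L q (0, 0, Pi.single i 1)) p
          (0, Pi.single j 1, 0) * p.2.2 j) +
      fderiv ℝ (fun q : Evo n => fderiv ℝ L q (0, 0, Pi.single i 1)) p (1, 0, 0)
        = fderiv ℝ L p (0, Pi.single i 1, 0))
    (p : Evo n) :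
    Gd F (Xd F X0 Xv (fun q => Real.log (hessV L q).det)) p
      = - Xd F X0 Xv (divG F) p + h p * divG F p := by
  have hldet : ∀ q : Evo n, ContDiffAt ℝ (⊤ : ℕ∞) (fun r => Real.log (hessV L r).det) q :=
    fun q => ((detW_contDiff hL).contDiffAt).log (ne_of_gt (hdetpos q))
  rw [Gd_Xd_comm hldet hF hX0 hXv hnorm p]
  have hmul : Gd F (fun q => Real.log (hessV L q).det) = fun q => -divG F q :=
    funext fun q => by rw [multiplier hL hF hdetpos hEL q]
  rw [hmul]
  have e1 : Xd F X0 Xv (fun q => -divG F q) p = - Xd F X0 Xv (divG F) p := by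
    have : Xd F X0 Xv (fun q => -divG F q) p
        = pd (prolong F X0 Xv p) (fun q => -divG F q) p := rfl
    rw [this, pd_neg]
    rfl
  rw [e1]
  ring

end Aux

open Aux

/-- Let `L(t,x,v)` be a smooth time-dependent regular Lagrangian with
velocity Hessian `W` invertible and `det W > 0` everywhere, and let
`Γ(t,x,v) = (1, v, F(t,x,v))` with `F` smooth satisfying the Euler–Lagrange relations.
Let `X⁰, X¹,…,Xⁿ` be smooth functions of `(t,x)` only and let `X^{(1)}` be the
prolongation with `X̄ⁱ = Γ(Xⁱ) − vⁱ·Γ(X⁰)`. If `[X^{(1)},Γ] = h·Γ` for a smooth `h`, then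
`I = 2∑ᵢ(∂Xⁱ/∂xⁱ − vⁱ·∂X⁰/∂xⁱ) − n·Γ(X⁰) + X^{(1)}(log det W)` is a first integral of `Γ`. -/
theorem stmt_14 {n : ℕ} (L : Evo n → ℝ) (F : Evo n → (Fin n → ℝ))
    (X0 : ℝ × (Fin n → ℝ) → ℝ) (Xv : ℝ × (Fin n → ℝ) → (Fin n → ℝ)) (h : Evo n → ℝ)
    (hL : ContDiff ℝ (⊤ : ℕ∞) L) (hF : ContDiff ℝ (⊤ : ℕ∞) F)
    (hX0 : ContDiff ℝ (⊤ : ℕ∞) X0) (hXv : ContDiff ℝ (⊤ : ℕ∞) Xv) (hh : ContDiff ℝ (⊤ : ℕ∞) h)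
    (hreg : ∀ p, IsUnit (hessV L p))
    (hdetpos : ∀ p, 0 < (hessV L p).det)
    (hEL : ∀ p : Evo n, ∀ i,
      (∑ j, hessV L p i j * F p j) +
      (∑ j, fderiv ℝ (fun q : Evo n => fderiv ℝ L q (0, 0, Pi.single i 1)) p
          (0, Pi.single j 1, 0) * p.2.2 j) +
      fderiv ℝ (fun q : Evo n => fderiv ℝ L q (0, 0, Pi.single i 1)) p (1, 0, 0)
        = fderiv ℝ L p (0, Pi.single i 1, 0))
    (hnorm : ∀ p, elieBracket (prolong F X0 Xv) (nsode F) p = h p • nsode F p) :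
    ∀ p : Evo n,
      fderiv ℝ (fun q : Evo n =>
        2 * (∑ i, (fderiv ℝ (fun r => Xv r i) (q.1, q.2.1) (0, Pi.single i 1)
              - q.2.2 i * fderiv ℝ X0 (q.1, q.2.1) (0, Pi.single i 1)))
        - (n : ℝ) * fderiv ℝ (fun r : Evo n => X0 (r.1, r.2.1)) q (nsode F q)
        + fderiv ℝ (fun r => Real.log (hessV L r).det) q (prolong F X0 Xv q))
        p (nsode F p) = 0 := by
  intro p
  have hL' : ContDiff ℝ (⊤ : ℕ∞) L := hL.of_le (by simp)
  have hF' : ContDiff ℝ (⊤ : ℕ∞) F := hF.of_le (by simp)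
  have hX0' : ContDiff ℝ (⊤ : ℕ∞) X0 := hX0.of_le (by simp)
  have hXv' : ContDiff ℝ (⊤ : ℕ∞) Xv := hXv.of_le (by simp)
  have hh' : ContDiff ℝ (⊤ : ℕ∞) h := hh.of_le (by simp)
  -- rewrite the integrand in terms of our operators
  have e1 : ∀ (q : Evo n) (i : Fin n),
      fderiv ℝ (fun r => Xv r i) (q.1, q.2.1) (0, Pi.single i 1) = pd (ex i) (Xic Xv i) q := by
    intro q i
    exact (pd_base (((contDiff_apply ℝ ℝ i).comp hXv').differentiable
      (by norm_cast) (q.1, q.2.1)) (ex i)).symm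
  have e2 : ∀ (q : Evo n) (i : Fin n),
      fderiv ℝ X0 (q.1, q.2.1) (0, Pi.single i 1) = pd (ex i) (X0c X0) q := by
    intro q i
    exact (pd_base ((hX0'.differentiable (by norm_cast)) (q.1, q.2.1)) (ex i)).symm
  have ebig : (fun q : Evo n =>
        2 * (∑ i, (fderiv ℝ (fun r => Xv r i) (q.1, q.2.1) (0, Pi.single i 1)
              - q.2.2 i * fderiv ℝ X0 (q.1, q.2.1) (0, Pi.single i 1)))
        - (n : ℝ) * fderiv ℝ (fun r : Evo n => X0 (r.1, r.2.1)) q (nsode F q)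
        + fderiv ℝ (fun r => Real.log (hessV L r).det) q (prolong F X0 Xv q))
      = fun q => 2 * Sfun X0 Xv q - (n : ℝ) * Gd F (X0c X0) q
          + Xd F X0 Xv (fun r => Real.log (hessV L r).det) q := by
    funext q
    simp only [e1, e2]
    rfl
  rw [ebig]
  -- differentiability of the three pieces
  have hldet : ∀ q : Evo n, ContDiffAt ℝ (⊤ : ℕ∞) (fun r => Real.log (hessV L r).det) q :=
    fun q => ((detW_contDiff hL').contDiffAt).log (ne_of_gt (hdetpos q))
  have dS : DifferentiableAt ℝ (Sfun (n := n) X0 Xv) p :=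
    ((Sfun_contDiff hX0' hXv').differentiable (by norm_cast)) p
  have dG0 : DifferentiableAt ℝ (Gd F (X0c X0)) p :=
    ((Gd_contDiff hF' (X0c_contDiff hX0')).differentiable (by norm_cast)) p
  have dJ : DifferentiableAt ℝ (Xd F X0 Xv (fun r => Real.log (hessV L r).det)) p := by
    have h1 : ContDiffAt ℝ (⊤ : ℕ∞) (fderiv ℝ (fun r => Real.log (hessV L r).det)) p :=
      (hldet p).fderiv_right (by norm_cast)
    exact (h1.differentiableAt (by norm_cast)).clm_apply
      (((prolong_contDiff hF' hX0' hXv').differentiable (by norm_cast)) p)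
  -- expand the derivative along Γ
  have e0 : fderiv ℝ (fun q => 2 * Sfun X0 Xv q - (n : ℝ) * Gd F (X0c X0) q
        + Xd F X0 Xv (fun r => Real.log (hessV L r).det) q) p (nsode F p)
      = pd (nsode F p) (fun q => 2 * Sfun X0 Xv q - (n : ℝ) * Gd F (X0c X0) q
        + Xd F X0 Xv (fun r => Real.log (hessV L r).det) q) p := rfl
  rw [e0, pd_add ((((differentiableAt_const _).fun_mul dS)).fun_sub
      ((differentiableAt_const _).fun_mul dG0)) dJ,
    pd_sub ((differentiableAt_const _).fun_mul dS) ((differentiableAt_const _).fun_mul dG0),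
    pd_const_mul dS, pd_const_mul dG0]
  have egd : ∀ g : Evo n → ℝ, pd (nsode F p) g p = Gd F g p := fun _ => rfl
  rw [egd, egd, egd]
  rw [keyJ hL' hF' hX0' hXv' hnorm hdetpos hEL p]
  have := keyB hF' hX0' hXv' hh' hnorm (p := p)
  linarith [this]
end
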